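/- arXiv:1801.01860 — 4 statements merged into one kernel-verified Lean document; each statement's English description precedes it below -/
import Mathlib

section
/- Let φ ∈ C^∞([-1,1],[0,1]) with φ(-1) = φ(1) = 0 and |φ'(y)| = 1 for |y| ≥ 1/4. Let γ : [-1,1] → ℝ be continuous with γ(y) = 0 for all y ∈ (-1/3, 1/3). Then for every measurable V : [0,∞) → ℝ with ∫₀^∞ V(z)² dz < ∞ and every ε > 0: (∫_{-1}^{1} γ(y)² V(φ(y)/√ε)² dy)^{1/2} ≤ 2 ε^{1/4} (sup_{y∈[-1,1]} |γ(y)|) (∫₀^∞ V(z)² dz)^{1/2}. -/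
open MeasureTheory Set Filter Topology

lemma phi_eq_left (φ : ℝ → ℝ) (hφs : ContDiffOn ℝ (⊤ : ℕ∞) φ (Set.Icc (-1:ℝ) 1))
    (hφrange : ∀ y ∈ Set.Icc (-1:ℝ) 1, 0 ≤ φ y)
    (hφm1 : φ (-1) = 0)
    (hφ' : ∀ y ∈ Set.Ioo (-1:ℝ) (-(1/4)), |deriv φ y| = 1) :
    ∀ x ∈ Set.Icc (-1:ℝ) (-(1/3)), φ x = x + 1 := by
  have huniq : UniqueDiffOn ℝ (Icc (-1:ℝ) 1) := uniqueDiffOn_Icc (by norm_num)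
  set d := derivWithin φ (Icc (-1:ℝ) 1) with hd
  have hd_cont : ContinuousOn d (Icc (-1:ℝ) 1) := hφs.continuousOn_derivWithin huniq (by exact_mod_cast le_top)
  have hd_eq : ∀ y ∈ Ioo (-1:ℝ) 1, d y = deriv φ y := fun y hy =>
    derivWithin_of_mem_nhds (Icc_mem_nhds hy.1 hy.2)
  have hd_abs : ∀ y ∈ Ioo (-1:ℝ) (-(1/4)), |d y| = 1 := by
    intro y hy
    rw [hd_eq y ⟨hy.1, by linarith [hy.2]⟩]
    exact hφ' y hy
  have hmem1 : (-1:ℝ) ∈ Icc (-1:ℝ) 1 := by norm_num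
  have hnb : (𝓝[Ioo (-1:ℝ) (-(1/4))] (-1)).NeBot := by
    apply mem_closure_iff_nhdsWithin_neBot.mp
    rw [closure_Ioo (by norm_num : (-1:ℝ) ≠ -(1/4))]
    exact ⟨le_refl _, by norm_num⟩
  have habs1 : |d (-1)| = 1 := by
    have h1 : Tendsto d (𝓝[Ioo (-1:ℝ) (-(1/4))] (-1)) (𝓝 (d (-1))) :=
      (hd_cont (-1) hmem1).mono (fun y hy => ⟨hy.1.le, by linarith [hy.2]⟩)
    refine tendsto_nhds_unique h1.abs ?_
    refine Tendsto.congr' ?_ tendsto_const_nhds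
    filter_upwards [self_mem_nhdsWithin] with y hy
    exact (hd_abs y hy).symm
  have hS : ∀ y ∈ Ico (-1:ℝ) (-(1/4)), |d y| = 1 := by
    intro y hy
    rcases eq_or_lt_of_le hy.1 with h | h
    · rw [← h]; exact habs1
    · exact hd_abs y ⟨h, hy.2⟩
  have habs_pm : d (-1) = 1 ∨ d (-1) = -1 := (abs_eq (le_of_lt one_pos)).mp habs1
  have hconst : ∀ y ∈ Ico (-1:ℝ) (-(1/4)), d y = d (-1) := by
    intro y hy
    by_contra hne
    have hy1 : |d y| = 1 := hS y hy
    have hcont' : ContinuousOn d (Icc (-1:ℝ) y) :=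
      hd_cont.mono (Icc_subset_Icc le_rfl (by linarith [hy.2]))
    have hss : Icc (-1:ℝ) y ⊆ Ico (-1:ℝ) (-(1/4)) := fun x hx => ⟨hx.1, lt_of_le_of_lt hx.2 hy.2⟩
    rcases habs_pm with h1 | h1
    · have h2 : d y = -1 := by
        rcases (abs_eq (le_of_lt one_pos)).mp hy1 with h | h
        · exact absurd (h.trans h1.symm) hne
        · exact h
      have h0 : (0:ℝ) ∈ Icc (d y) (d (-1)) := by rw [h1, h2]; norm_num
      obtain ⟨x, hx, hx0⟩ := intermediate_value_Icc' hy.1 hcont' h0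
      have := hS x (hss hx); rw [hx0] at this; norm_num at this
    · have h2 : d y = 1 := by
        rcases (abs_eq (le_of_lt one_pos)).mp hy1 with h | h
        · exact h
        · exact absurd (h.trans h1.symm) hne
      have h0 : (0:ℝ) ∈ Icc (d (-1)) (d y) := by rw [h1, h2]; norm_num
      obtain ⟨x, hx, hx0⟩ := intermediate_value_Icc hy.1 hcont' h0
      have := hS x (hss hx); rw [hx0] at this; norm_num at this
  set c := d (-1) with hc
  have hder : ∀ x ∈ Ico (-1:ℝ) (-(1/3)), HasDerivWithinAt φ c (Ici x) x := by
    intro x hx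
    have hx1 : x ∈ Icc (-1:ℝ) 1 := ⟨hx.1, by linarith [hx.2]⟩
    have h1 : HasDerivWithinAt φ (d x) (Icc (-1:ℝ) 1) x :=
      ((hφs.differentiableOn (by simp)) x hx1).hasDerivWithinAt
    rw [hconst x ⟨hx.1, by linarith [hx.2]⟩] at h1
    refine h1.mono_of_mem_nhdsWithin ?_
    have h2 : Ici x ∩ Iio 1 ⊆ Icc (-1:ℝ) 1 := fun z hz => ⟨le_trans hx1.1 hz.1, hz.2.le⟩
    exact mem_of_superset
      (inter_mem self_mem_nhdsWithin
        (mem_nhdsWithin_of_mem_nhds (Iio_mem_nhds (by linarith [hx.2])))) h2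
  have hgder : ∀ x ∈ Ico (-1:ℝ) (-(1/3)),
      HasDerivWithinAt (fun t => c * (t + 1)) c (Ici x) x := by
    intro x _
    have h := ((hasDerivAt_id x).add_const (1:ℝ)).const_mul c
    rw [mul_one] at h
    exact h.hasDerivWithinAt
  have heq := eq_of_has_deriv_right_eq hder hgder
    (hφs.continuousOn.mono (Icc_subset_Icc le_rfl (by norm_num)))
    (by fun_prop) (by rw [hφm1]; ring)
  rcases habs_pm with h1 | h1
  · intro x hx
    rw [heq x hx, h1, one_mul]
  · exfalso
    have h2 := heq (-(1/3)) ⟨by norm_num, le_refl _⟩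
    have h3 := hφrange (-(1/3)) ⟨by norm_num, by norm_num⟩
    rw [h2, h1] at h3
    norm_num at h3

/-- Lemma 4.2 of the paper, fast variable scaling:
if `γ` vanishes on `(-1/3,1/3)` and `φ` is a smooth `[0,1]`-valued function on
`[-1,1]` vanishing at `±1` with `|φ'| = 1` for `|y| ≥ 1/4`, then for every
square-integrable `V` on `ℝ₊` and every `ε > 0`,
`‖γ V(φ(·)/√ε)‖_{L²(-1,1)} ≤ 2 ε^{1/4} ‖γ‖_∞ ‖V‖_{L²(ℝ₊)}`. -/
theorem fast_variable_scaling
    (φ : ℝ → ℝ) (hφs : ContDiffOn ℝ (⊤ : ℕ∞) φ (Set.Icc (-1:ℝ) 1))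
    (hφrange : ∀ y ∈ Set.Icc (-1:ℝ) 1, φ y ∈ Set.Icc (0:ℝ) 1)
    (hφm1 : φ (-1) = 0) (hφ1 : φ 1 = 0)
    (hφ' : ∀ y ∈ Set.Icc (-1:ℝ) 1, 1/4 ≤ |y| → |deriv φ y| = 1)
    (γ : ℝ → ℝ) (hγc : ContinuousOn γ (Set.Icc (-1:ℝ) 1))
    (hγ0 : ∀ y ∈ Set.Ioo (-(1:ℝ)/3) (1/3), γ y = 0)
    (V : ℝ → ℝ) (hVm : Measurable V)
    (hV2 : IntegrableOn (fun z => V z ^ 2) (Set.Ioi (0:ℝ)))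
    (ε : ℝ) (hε : 0 < ε) :
    Real.sqrt (∫ y in (-1:ℝ)..1, γ y ^ 2 * V (φ y / Real.sqrt ε) ^ 2) ≤
      2 * ε ^ ((1:ℝ)/4) * (⨆ y : Set.Icc (-1:ℝ) 1, |γ (y : ℝ)|) *
        Real.sqrt (∫ z in Set.Ioi (0:ℝ), V z ^ 2) := by
  -- the two formulas for φ
  have hL : ∀ x ∈ Set.Icc (-1:ℝ) (-(1/3)), φ x = x + 1 := by
    refine phi_eq_left φ hφs (fun y hy => (hφrange y hy).1) hφm1 ?_
    intro y hy
    refine hφ' y ⟨hy.1.le, by linarith [hy.2]⟩ ?_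
    rw [abs_of_neg (by linarith [hy.2])]
    linarith [hy.2]
  have hR : ∀ x ∈ Set.Icc ((1:ℝ)/3) 1, φ x = 1 - x := by
    have hmaps : MapsTo (fun t : ℝ => -t) (Icc (-1:ℝ) 1) (Icc (-1:ℝ) 1) := by
      intro t ht
      have h1 := ht.1; have h2 := ht.2
      refine ⟨?_, ?_⟩ <;> simp <;> linarith
    have hkey := phi_eq_left (fun t => φ (-t))
      (hφs.comp (contDiff_neg.contDiffOn) hmaps)
      (fun y hy => (hφrange (-y) (hmaps hy)).1)
      (by norm_num [hφ1])
      (by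
        intro y hy
        have hy2 : -y ∈ Icc (-1:ℝ) 1 := ⟨by linarith [hy.2], by linarith [hy.1]⟩
        have hdiff : DifferentiableAt ℝ φ (-y) :=
          (((hφs.differentiableOn (by simp)) (-y) hy2).differentiableAt
            (Icc_mem_nhds (by linarith [hy.2]) (by linarith [hy.1])))
        have h1 : HasDerivAt (fun t : ℝ => φ (-t)) (deriv φ (-y) * -1) y :=
          hdiff.hasDerivAt.comp y (hasDerivAt_neg y)
        rw [h1.deriv, abs_mul]
        have h2 : |deriv φ (-y)| = 1 := by
          refine hφ' (-y) hy2 ?_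
          rw [abs_of_pos (by linarith [hy.2])]
          linarith [hy.2]
        rw [h2]
        norm_num)
    intro x hx
    have := hkey (-x) ⟨by linarith [hx.2], by linarith [hx.1]⟩
    simp only [neg_neg] at this
    rw [this]; ring
  -- notation
  set s := Real.sqrt ε with hs_def
  have hs : 0 < s := Real.sqrt_pos.mpr hε
  set W : ℝ → ℝ := fun z => V z ^ 2 with hW_def
  set K := ∫ z in Set.Ioi (0:ℝ), V z ^ 2 with hK_def
  have hK0 : 0 ≤ K := setIntegral_nonneg measurableSet_Ioi (fun z _ => sq_nonneg _)
  set M := ⨆ y : Set.Icc (-1:ℝ) 1, |γ (y : ℝ)| with hM_def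
  have hbdd : BddAbove (Set.range fun y : Set.Icc (-1:ℝ) 1 => |γ (y : ℝ)|) := by
    rw [show (fun y : Set.Icc (-1:ℝ) 1 => |γ (y : ℝ)|)
        = (fun y => |γ y|) ∘ ((↑) : Set.Icc (-1:ℝ) 1 → ℝ) from rfl,
      Set.range_comp, Subtype.range_coe]
    exact (isCompact_Icc.image_of_continuousOn hγc.abs).bddAbove
  have hMb : ∀ y ∈ Icc (-1:ℝ) 1, |γ y| ≤ M := fun y hy => le_ciSup hbdd ⟨y, hy⟩
  have hM0 : 0 ≤ M := le_trans (abs_nonneg _) (hMb 0 (by norm_num))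
  -- the comparison functions
  set f₁ : ℝ → ℝ := fun y => W ((y + 1) / s) with hf₁_def
  set f₂ : ℝ → ℝ := fun y => W ((1 - y) / s) with hf₂_def
  set T : ℝ := 2 / (3 * s) with hT_def
  have hT : 0 < T := by positivity
  -- integrability of the comparison pieces
  have hWIoc : IntegrableOn W (Ioc (0:ℝ) T) := hV2.mono_set Ioc_subset_Ioi_self
  have hWint : IntervalIntegrable W volume 0 T :=
    (intervalIntegrable_iff_integrableOn_Ioc_of_le hT.le).mpr hWIoc
  have h1' : IntervalIntegrable (fun x => W (x / s)) volume 0 (2/3) := by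
    have h1 := hWint.comp_mul_right (c := s⁻¹)
    have e1 : (0:ℝ) / s⁻¹ = 0 := by simp
    have e2 : T / s⁻¹ = 2/3 := by
      rw [hT_def]
      field_simp
    rw [e1, e2] at h1
    simpa only [← div_eq_mul_inv] using h1
  have hIf₁ : IntegrableOn f₁ (Icc (-1:ℝ) (-(1/3))) := by
    have h2 := h1'.comp_add_right 1
    have e1 : (0:ℝ) - 1 = -1 := by norm_num
    have e2 : (2:ℝ)/3 - 1 = -(1/3) := by norm_num
    rw [e1, e2] at h2
    exact (integrableOn_Icc_iff_integrableOn_Ioc (f := f₁) (a := (-1:ℝ))).mpr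
      ((intervalIntegrable_iff_integrableOn_Ioc_of_le (by norm_num)).mp h2)
  have hIf₂ : IntegrableOn f₂ (Icc ((1:ℝ)/3) 1) := by
    have h2 := (h1'.comp_sub_left 1).symm
    have e1 : (1:ℝ) - 0 = 1 := by norm_num
    have e2 : (1:ℝ) - 2/3 = 1/3 := by norm_num
    rw [e1, e2] at h2
    exact (integrableOn_Icc_iff_integrableOn_Ioc (f := f₂) (a := ((1:ℝ)/3))).mpr
      ((intervalIntegrable_iff_integrableOn_Ioc_of_le (by norm_num)).mp h2)
  -- the dominating function
  set G : ℝ → ℝ := fun y => M^2 *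
    ((Icc (-1:ℝ) (-(1/3))).indicator f₁ y + (Icc ((1:ℝ)/3) 1).indicator f₂ y) with hG_def
  have hind1 : Integrable ((Icc (-1:ℝ) (-(1/3))).indicator f₁) volume :=
    (integrable_indicator_iff measurableSet_Icc).mpr hIf₁
  have hind2 : Integrable ((Icc ((1:ℝ)/3) 1).indicator f₂) volume :=
    (integrable_indicator_iff measurableSet_Icc).mpr hIf₂
  have hG_int_glob : Integrable G volume := ((hind1.add hind2).const_mul (M^2))
  have hG_int : Integrable G (volume.restrict (Ioc (-1:ℝ) 1)) := hG_int_glob.restrict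
  -- pointwise bound
  set F : ℝ → ℝ := fun y => γ y ^ 2 * V (φ y / s) ^ 2 with hF_def
  have hF_nonneg : ∀ y, 0 ≤ F y := fun y => mul_nonneg (sq_nonneg _) (sq_nonneg _)
  have hG_nonneg : ∀ y, 0 ≤ G y := by
    intro y
    apply mul_nonneg (sq_nonneg _)
    apply add_nonneg
    · exact Set.indicator_nonneg (fun z _ => sq_nonneg _) y
    · exact Set.indicator_nonneg (fun z _ => sq_nonneg _) y
  have hFG : ∀ y ∈ Ioc (-1:ℝ) 1, F y ≤ G y := by
    intro y hy
    rcases le_or_gt y (-(1/3)) with h | h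
    · have hyI : y ∈ Icc (-1:ℝ) (-(1/3)) := ⟨hy.1.le, h⟩
      have hφy : φ y = y + 1 := hL y hyI
      have hγ2 : γ y ^ 2 ≤ M ^ 2 := by
        rw [← sq_abs]
        exact pow_le_pow_left₀ (abs_nonneg _) (hMb y ⟨hy.1.le, hy.2⟩) 2
      have hFy : F y = γ y ^ 2 * f₁ y := by rw [hF_def]; simp only [hφy, hf₁_def, hW_def]
      have h1 : F y ≤ M ^ 2 * f₁ y := by
        rw [hFy]
        exact mul_le_mul_of_nonneg_right hγ2 (sq_nonneg _)
      have h2 : (Icc (-1:ℝ) (-(1/3))).indicator f₁ y = f₁ y := Set.indicator_of_mem hyI _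
      have h3 : 0 ≤ (Icc ((1:ℝ)/3) 1).indicator f₂ y :=
        Set.indicator_nonneg (fun z _ => sq_nonneg _) y
      simp only [hG_def, h2]
      nlinarith [sq_nonneg M]
    · rcases lt_or_ge y (1/3) with h2 | h2
      · have : γ y = 0 := hγ0 y ⟨by linarith, h2⟩
        have : F y = 0 := by rw [hF_def]; simp [this]
        rw [this]; exact hG_nonneg y
      · have hyI : y ∈ Icc ((1:ℝ)/3) 1 := ⟨h2, hy.2⟩
        have hφy : φ y = 1 - y := hR y hyI
        have hγ2 : γ y ^ 2 ≤ M ^ 2 := by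
          rw [← sq_abs]
          exact pow_le_pow_left₀ (abs_nonneg _) (hMb y ⟨hy.1.le, hy.2⟩) 2
        have hFy : F y = γ y ^ 2 * f₂ y := by rw [hF_def]; simp only [hφy, hf₂_def, hW_def]
        have h1 : F y ≤ M ^ 2 * f₂ y := by
          rw [hFy]
          exact mul_le_mul_of_nonneg_right hγ2 (sq_nonneg _)
        have h3 : (Icc ((1:ℝ)/3) 1).indicator f₂ y = f₂ y := Set.indicator_of_mem hyI _
        have h4 : 0 ≤ (Icc (-1:ℝ) (-(1/3))).indicator f₁ y :=
          Set.indicator_nonneg (fun z _ => sq_nonneg _) y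
        simp only [hG_def, h3]
        nlinarith [sq_nonneg M]
  -- measurability of F on the restricted measure
  have hres_le : volume.restrict (Ioc (-1:ℝ) 1) ≤ volume.restrict (Icc (-1:ℝ) 1) :=
    Measure.restrict_mono Ioc_subset_Icc_self le_rfl
  have hγm : AEMeasurable γ (volume.restrict (Ioc (-1:ℝ) 1)) :=
    (hγc.aemeasurable measurableSet_Icc).mono_measure hres_le
  have hφm : AEMeasurable φ (volume.restrict (Ioc (-1:ℝ) 1)) :=
    (hφs.continuousOn.aemeasurable measurableSet_Icc).mono_measure hres_le
  have hF_meas : AEStronglyMeasurable F (volume.restrict (Ioc (-1:ℝ) 1)) := by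
    refine AEMeasurable.aestronglyMeasurable ?_
    exact ((hγm.pow_const 2).mul
      ((hVm.comp_aemeasurable (hφm.div_const s)).pow_const 2))
  have hae : ∀ᵐ y ∂(volume.restrict (Ioc (-1:ℝ) 1)), F y ≤ G y :=
    (ae_restrict_iff' measurableSet_Ioc).mpr (Filter.Eventually.of_forall hFG)
  have hF_int : Integrable F (volume.restrict (Ioc (-1:ℝ) 1)) := by
    refine Integrable.mono' hG_int hF_meas ?_
    refine (ae_restrict_iff' measurableSet_Ioc).mpr (Filter.Eventually.of_forall ?_)
    intro y hy
    rw [Real.norm_eq_abs, abs_of_nonneg (hF_nonneg y)]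
    exact hFG y hy
  -- integral comparison
  have hstep1 : ∫ y in Ioc (-1:ℝ) 1, F y ≤ ∫ y in Ioc (-1:ℝ) 1, G y :=
    integral_mono_ae hF_int hG_int hae
  -- evaluate the integral of G
  have hval₁ : ∫ y in Ioc (-1:ℝ) (-(1/3)), f₁ y ≤ s * K := by
    rw [← intervalIntegral.integral_of_le (by norm_num : (-1:ℝ) ≤ -(1/3))]
    have e1 : ∫ y in (-1:ℝ)..(-(1/3)), f₁ y = ∫ u in (0:ℝ)..(2/3), W (u / s) := by
      have h := intervalIntegral.integral_comp_add_right
        (a := (-1:ℝ)) (b := -(1/3)) (f := fun u => W (u / s)) 1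
      norm_num at h
      convert h using 2
    rw [e1, intervalIntegral.integral_comp_div (f := W) hs.ne']
    have e2 : (0:ℝ)/s = 0 := by simp
    have e3 : (2:ℝ)/3/s = T := by rw [hT_def]; ring
    rw [e2, e3, smul_eq_mul]
    have hmono : ∫ z in (0:ℝ)..T, W z ≤ K := by
      rw [intervalIntegral.integral_of_le hT.le]
      exact setIntegral_mono_set hV2
        (Filter.Eventually.of_forall (fun z => sq_nonneg (V z)))
        (HasSubset.Subset.eventuallyLE Ioc_subset_Ioi_self)
    exact mul_le_mul_of_nonneg_left hmono hs.le
  have hval₂ : ∫ y in Ioc ((1:ℝ)/3) 1, f₂ y ≤ s * K := by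
    rw [← intervalIntegral.integral_of_le (by norm_num : (1:ℝ)/3 ≤ 1)]
    have e1 : ∫ y in ((1:ℝ)/3)..1, f₂ y = ∫ u in (0:ℝ)..(2/3), W (u / s) := by
      have h := intervalIntegral.integral_comp_sub_left
        (a := ((1:ℝ)/3)) (b := 1) (f := fun u => W (u / s)) 1
      norm_num at h
      convert h using 2
    rw [e1, intervalIntegral.integral_comp_div (f := W) hs.ne']
    have e2 : (0:ℝ)/s = 0 := by simp
    have e3 : (2:ℝ)/3/s = T := by rw [hT_def]; ring
    rw [e2, e3, smul_eq_mul]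
    have hmono : ∫ z in (0:ℝ)..T, W z ≤ K := by
      rw [intervalIntegral.integral_of_le hT.le]
      exact setIntegral_mono_set hV2
        (Filter.Eventually.of_forall (fun z => sq_nonneg (V z)))
        (HasSubset.Subset.eventuallyLE Ioc_subset_Ioi_self)
    exact mul_le_mul_of_nonneg_left hmono hs.le
  have hGval : ∫ y in Ioc (-1:ℝ) 1, G y ≤ 2 * s * M^2 * K := by
    have hsplit : ∫ y in Ioc (-1:ℝ) 1, G y = M^2 *
        ((∫ y in Ioc (-1:ℝ) 1, (Icc (-1:ℝ) (-(1/3))).indicator f₁ y) +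
         (∫ y in Ioc (-1:ℝ) 1, (Icc ((1:ℝ)/3) 1).indicator f₂ y)) := by
      rw [hG_def]
      rw [integral_const_mul]
      rw [integral_add (hind1.restrict) (hind2.restrict)]
    have hA : ∫ y in Ioc (-1:ℝ) 1, (Icc (-1:ℝ) (-(1/3))).indicator f₁ y
        = ∫ y in Ioc (-1:ℝ) (-(1/3)), f₁ y := by
      rw [setIntegral_indicator measurableSet_Icc,
        show Ioc (-1:ℝ) 1 ∩ Icc (-1:ℝ) (-(1/3)) = Ioc (-1:ℝ) (-(1/3)) by
          ext z
          simp only [mem_inter_iff, mem_Ioc, mem_Icc]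
          constructor
          · rintro ⟨⟨h1, _⟩, _, h4⟩; exact ⟨h1, h4⟩
          · rintro ⟨h1, h2⟩; exact ⟨⟨h1, by linarith⟩, by linarith, h2⟩]
    have hB : ∫ y in Ioc (-1:ℝ) 1, (Icc ((1:ℝ)/3) 1).indicator f₂ y
        = ∫ y in Ioc ((1:ℝ)/3) 1, f₂ y := by
      rw [setIntegral_indicator measurableSet_Icc]
      rw [show Ioc (-1:ℝ) 1 ∩ Icc ((1:ℝ)/3) 1 = Icc ((1:ℝ)/3) 1 by
        ext z
        simp only [mem_inter_iff, mem_Ioc, mem_Icc]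
        constructor
        · rintro ⟨_, h⟩; exact h
        · rintro ⟨h1, h2⟩; exact ⟨⟨by linarith, h2⟩, h1, h2⟩]
      exact integral_Icc_eq_integral_Ioc
    rw [hsplit, hA, hB]
    nlinarith [sq_nonneg M]
  -- put everything together
  have hJ : ∫ y in (-1:ℝ)..1, γ y ^ 2 * V (φ y / s) ^ 2 ≤ 2 * s * M^2 * K := by
    rw [intervalIntegral.integral_of_le (by norm_num : (-1:ℝ) ≤ 1)]
    exact le_trans hstep1 hGval
  have hrpow : (ε ^ ((1:ℝ)/4)) ^ 2 = s := by
    rw [hs_def, Real.sqrt_eq_rpow, ← Real.rpow_natCast (ε ^ ((1:ℝ)/4)) 2,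
      ← Real.rpow_mul hε.le]
    norm_num
  have hRHS_sq : (2 * ε ^ ((1:ℝ)/4) * M * Real.sqrt K) ^ 2 = 4 * s * M^2 * K := by
    have hsK : Real.sqrt K ^ 2 = K := Real.sq_sqrt hK0
    calc (2 * ε ^ ((1:ℝ)/4) * M * Real.sqrt K) ^ 2
        = 4 * (ε ^ ((1:ℝ)/4))^2 * M^2 * (Real.sqrt K)^2 := by ring
      _ = 4 * s * M^2 * K := by rw [hrpow, hsK]
  have hRHS_nonneg : 0 ≤ 2 * ε ^ ((1:ℝ)/4) * M * Real.sqrt K := by positivity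
  calc Real.sqrt (∫ y in (-1:ℝ)..1, γ y ^ 2 * V (φ y / s) ^ 2)
      ≤ Real.sqrt ((2 * ε ^ ((1:ℝ)/4) * M * Real.sqrt K) ^ 2) := by
        apply Real.sqrt_le_sqrt
        rw [hRHS_sq]
        nlinarith [hK0, hM0, hs.le, sq_nonneg M]
    _ = 2 * ε ^ ((1:ℝ)/4) * M * Real.sqrt K := Real.sqrt_sq hRHS_nonneg
end

section
/- Let a : [-1,1] → ℝ be continuously differentiable with a(-1) = a(1) = 0. Then sup_{y∈[-1,1]} |a(y)| ≤ (∫_{-1}^{1} a(y)² dy)^{1/4} · (∫_{-1}^{1} a'(y)² dy)^{1/4}. -/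
open MeasureTheory Set

/-- Lemma 5.2 of the paper: one-dimensional Gagliardo-Nirenberg
(Agmon-type) interpolation inequality with unit constant, for a continuously
differentiable function on `[-1,1]` vanishing at both endpoints. -/
theorem agmon_interpolation_unit_constant
    (a a' : ℝ → ℝ)
    (hderiv : ∀ y ∈ Set.Icc (-1:ℝ) 1, HasDerivWithinAt a (a' y) (Set.Icc (-1) 1) y)
    (hcont : ContinuousOn a' (Set.Icc (-1) 1))
    (hm1 : a (-1) = 0) (h1 : a 1 = 0) :
    (⨆ y : Set.Icc (-1:ℝ) 1, |a y|) ≤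
      (∫ y in (-1:ℝ)..1, a y ^ 2) ^ ((1:ℝ)/4) *
        (∫ y in (-1:ℝ)..1, a' y ^ 2) ^ ((1:ℝ)/4) := by
  set I : Set ℝ := Set.Icc (-1:ℝ) 1 with hI
  have hca : ContinuousOn a I := fun y hy => (hderiv y hy).continuousWithinAt
  have hcprod : ContinuousOn (fun y => 2 * a y * a' y) I :=
    ((continuousOn_const.mul hca).mul hcont)
  -- integrability of 2*a*a' on subintervals
  have hint : ∀ u v : ℝ, u ∈ I → v ∈ I → u ≤ v →
      IntervalIntegrable (fun y => 2 * a y * a' y) volume u v := by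
    intro u v hu hv huv
    apply ContinuousOn.intervalIntegrable
    rw [Set.uIcc_of_le huv]
    exact hcprod.mono (Set.Icc_subset_Icc hu.1 hv.2)
  -- FTC for a^2
  have ftc : ∀ u v : ℝ, u ∈ I → v ∈ I → u ≤ v →
      ∫ y in u..v, 2 * a y * a' y = a v ^ 2 - a u ^ 2 := by
    intro u v hu hv huv
    apply intervalIntegral.integral_eq_sub_of_hasDeriv_right_of_le huv
    · exact ((hca.mono (Set.Icc_subset_Icc hu.1 hv.2)).pow 2)
    · intro x hx
      have hxI : x ∈ I := ⟨by linarith [hu.1, hx.1], by linarith [hv.2, hx.2]⟩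
      have hnhds : I ∈ nhds x :=
        Icc_mem_nhds (by linarith [hu.1, hx.1]) (by linarith [hv.2, hx.2])
      have hd : HasDerivAt a (a' x) x := (hderiv x hxI).hasDerivAt hnhds
      have h2 := hd.pow 2
      norm_num at h2
      exact h2.hasDerivWithinAt
    · exact hint u v hu hv huv
  have hm1I : (-1:ℝ) ∈ I := by constructor <;> norm_num
  have h1I : (1:ℝ) ∈ I := by constructor <;> norm_num
  set A := ∫ y in (-1:ℝ)..1, a y ^ 2 with hA
  set B := ∫ y in (-1:ℝ)..1, a' y ^ 2 with hB
  have hA0 : 0 ≤ A := intervalIntegral.integral_nonneg (by norm_num) (fun y _ => sq_nonneg _)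
  have hB0 : 0 ≤ B := intervalIntegral.integral_nonneg (by norm_num) (fun y _ => sq_nonneg _)
  -- Hölder / Cauchy–Schwarz step
  have hmu : IsFiniteMeasure (volume.restrict (Set.Ioc (-1:ℝ) 1)) := by
    constructor
    rw [Measure.restrict_apply_univ]
    simp [Real.volume_Ioc]
  have holder : (∫ y in (-1:ℝ)..1, |a y * a' y|) ≤ A ^ ((1:ℝ)/2) * B ^ ((1:ℝ)/2) := by
    have hpq : Real.HolderConjugate 2 2 := ⟨by norm_num, by norm_num, by norm_num⟩
    have hma : MemLp a (ENNReal.ofReal 2) (volume.restrict (Set.Ioc (-1:ℝ) 1)) := by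
      obtain ⟨C, hC⟩ := (isCompact_Icc (a := (-1:ℝ)) (b := 1)).exists_bound_of_continuousOn hca
      refine MemLp.of_bound ?_ C ?_
      · exact (hca.mono Set.Ioc_subset_Icc_self).aestronglyMeasurable measurableSet_Ioc
      · refine (ae_restrict_iff' measurableSet_Ioc).2 (.of_forall fun y hy => ?_)
        exact hC y (Set.Ioc_subset_Icc_self hy)
    have hma' : MemLp a' (ENNReal.ofReal 2) (volume.restrict (Set.Ioc (-1:ℝ) 1)) := by
      obtain ⟨C, hC⟩ := (isCompact_Icc (a := (-1:ℝ)) (b := 1)).exists_bound_of_continuousOn hcont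
      refine MemLp.of_bound ?_ C ?_
      · exact (hcont.mono Set.Ioc_subset_Icc_self).aestronglyMeasurable measurableSet_Ioc
      · refine (ae_restrict_iff' measurableSet_Ioc).2 (.of_forall fun y hy => ?_)
        exact hC y (Set.Ioc_subset_Icc_self hy)
    have key := integral_mul_norm_le_Lp_mul_Lq (μ := volume.restrict (Set.Ioc (-1:ℝ) 1))
      hpq hma hma'
    rw [intervalIntegral.integral_of_le (by norm_num : (-1:ℝ) ≤ 1)]
    have e1 : ∀ y : ℝ, |a y * a' y| = ‖a y‖ * ‖a' y‖ := fun y => by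
      rw [abs_mul]; rfl
    simp only [e1]
    refine key.trans (le_of_eq ?_)
    have e2 : ∀ x : ℝ, ‖x‖ ^ (2:ℝ) = x ^ 2 := fun x => by
      rw [show (2:ℝ) = ((2:ℕ):ℝ) by norm_num, Real.rpow_natCast, Real.norm_eq_abs, sq_abs]
    have eA : (∫ y in Set.Ioc (-1:ℝ) 1, ‖a y‖ ^ (2:ℝ)) = A := by
      rw [hA, intervalIntegral.integral_of_le (by norm_num : (-1:ℝ) ≤ 1)]
      exact integral_congr_ae (.of_forall fun y => e2 _)
    have eB : (∫ y in Set.Ioc (-1:ℝ) 1, ‖a' y‖ ^ (2:ℝ)) = B := by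
      rw [hB, intervalIntegral.integral_of_le (by norm_num : (-1:ℝ) ≤ 1)]
      exact integral_congr_ae (.of_forall fun y => e2 _)
    rw [eA, eB]
  -- pointwise bound
  have key : ∀ x ∈ I, |a x| ≤ A ^ ((1:ℝ)/4) * B ^ ((1:ℝ)/4) := by
    intro x hx
    have habs : IntervalIntegrable (fun y => |a y * a' y|) volume (-1) 1 := by
      apply ContinuousOn.intervalIntegrable
      rw [Set.uIcc_of_le (by norm_num : (-1:ℝ) ≤ 1)]
      exact ((hca.mul hcont).abs)
    have habs1 : IntervalIntegrable (fun y => |a y * a' y|) volume (-1) x := by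
      refine habs.mono_set ?_
      rw [Set.uIcc_of_le hx.1, Set.uIcc_of_le (by norm_num : (-1:ℝ) ≤ 1)]
      exact Set.Icc_subset_Icc le_rfl hx.2
    have habs2 : IntervalIntegrable (fun y => |a y * a' y|) volume x 1 := by
      refine habs.mono_set ?_
      rw [Set.uIcc_of_le hx.2, Set.uIcc_of_le (by norm_num : (-1:ℝ) ≤ 1)]
      exact Set.Icc_subset_Icc hx.1 le_rfl
    have ef1 : ∫ y in (-1:ℝ)..x, 2 * a y * a' y = a x ^ 2 := by
      rw [ftc (-1) x hm1I hx hx.1, hm1]; ring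
    have ef2 : ∫ y in x..(1:ℝ), 2 * a y * a' y = - a x ^ 2 := by
      rw [ftc x 1 hx h1I hx.2, h1]; ring
    have hsq : a x ^ 2 ≤ ∫ y in (-1:ℝ)..1, |a y * a' y| := by
      have b1 : ∫ y in (-1:ℝ)..x, 2 * a y * a' y ≤
          2 * ∫ y in (-1:ℝ)..x, |a y * a' y| := by
        rw [← intervalIntegral.integral_const_mul]
        apply intervalIntegral.integral_mono_on hx.1 (hint (-1) x hm1I hx hx.1)
          (habs1.const_mul 2)
        intro y _
        calc 2 * a y * a' y ≤ |2 * a y * a' y| := le_abs_self _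
          _ = 2 * |a y * a' y| := by rw [mul_assoc, abs_mul]; simp
      have b2 : -(∫ y in x..(1:ℝ), 2 * a y * a' y) ≤
          2 * ∫ y in x..(1:ℝ), |a y * a' y| := by
        rw [← intervalIntegral.integral_neg, ← intervalIntegral.integral_const_mul]
        apply intervalIntegral.integral_mono_on hx.2
          ((hint x 1 hx h1I hx.2).neg) (habs2.const_mul 2)
        intro y _
        calc -(2 * a y * a' y) ≤ |-(2 * a y * a' y)| := le_abs_self _
          _ = 2 * |a y * a' y| := by rw [abs_neg, mul_assoc, abs_mul]; simp
      have hsum : (∫ y in (-1:ℝ)..x, |a y * a' y|) + ∫ y in x..(1:ℝ), |a y * a' y| =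
          ∫ y in (-1:ℝ)..1, |a y * a' y| :=
        intervalIntegral.integral_add_adjacent_intervals habs1 habs2
      nlinarith [ef1, ef2, b1, b2, hsum]
    have hsq2 : a x ^ 2 ≤ A ^ ((1:ℝ)/2) * B ^ ((1:ℝ)/2) := hsq.trans holder
    have : |a x| = Real.sqrt (a x ^ 2) := (Real.sqrt_sq_eq_abs _).symm
    rw [this]
    calc Real.sqrt (a x ^ 2) ≤ Real.sqrt (A ^ ((1:ℝ)/2) * B ^ ((1:ℝ)/2)) :=
          Real.sqrt_le_sqrt hsq2
      _ = A ^ ((1:ℝ)/4) * B ^ ((1:ℝ)/4) := by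
          rw [Real.sqrt_eq_rpow, Real.mul_rpow (Real.rpow_nonneg hA0 _)
            (Real.rpow_nonneg hB0 _), ← Real.rpow_mul hA0, ← Real.rpow_mul hB0]
          norm_num
  haveI : Nonempty (Set.Icc (-1:ℝ) 1) := ⟨⟨0, by norm_num⟩⟩
  exact ciSup_le fun y => key y y.2
end

section
/- Let T > 0, let n be a positive integer, and let h : ℝ → ℝ be smooth with supp h ⊆ (0, T) and ∫₀^T t^k h(t) dt = 0 for every integer 0 ≤ k < n. Define F : ℝ → ℂ by F(ζ) := (−2iζ/(1+ζ²)) · ∫₀^T e^{−(T−t)ζ²} (h(t) − h'(t)) dt. Then F is infinitely differentiable and its j-th derivative at ζ = 0 vanishes for every integer j with 0 ≤ j ≤ 2n. -/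
open MeasureTheory Set intervalIntegral Metric


private lemma pp_hasDerivAt {a b : ℝ} (Φ : ℝ × ℝ → ℝ) (hΦ : ContDiff ℝ (⊤:ℕ∞) Φ) (x₀ : ℝ) :
    HasDerivAt (fun x => ∫ t in a..b, Φ (x, t))
      (∫ t in a..b, fderiv ℝ Φ (x₀, t) (1, 0)) x₀ := by
  set D : ℝ × ℝ → ℝ := fun p => fderiv ℝ Φ p (1, 0) with hD
  have hDc : Continuous D :=
    ((hΦ.fderiv_right (m := (⊤:ℕ∞)) (by exact_mod_cast le_top)).clm_apply contDiff_const).continuous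
  obtain ⟨C, hC⟩ := ((isCompact_Icc (a := x₀ - 1) (b := x₀ + 1)).prod
    (isCompact_uIcc (a := a) (b := b))).exists_bound_of_continuousOn (f := D) hDc.continuousOn
  have hball : ball x₀ 1 ⊆ Icc (x₀ - 1) (x₀ + 1) := by
    rw [Real.ball_eq_Ioo]; exact Ioo_subset_Icc_self
  have key := intervalIntegral.hasDerivAt_integral_of_dominated_loc_of_deriv_le
    (F := fun x t => Φ (x, t)) (F' := fun x t => D (x, t)) (x₀ := x₀) (a := a) (b := b)
    (μ := volume) (bound := fun _ => C) (s := ball x₀ 1) (ball_mem_nhds x₀ one_pos)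
    (Filter.Eventually.of_forall fun x =>
      (hΦ.continuous.comp (continuous_const.prodMk continuous_id)).aestronglyMeasurable)
    ((hΦ.continuous.comp (continuous_const.prodMk continuous_id)).intervalIntegrable a b)
    ((hDc.comp (continuous_const.prodMk continuous_id)).aestronglyMeasurable)
    (Filter.Eventually.of_forall fun t ht x hx =>
      hC (x, t) ⟨hball hx, uIoc_subset_uIcc ht⟩)
    (intervalIntegrable_const)
    (Filter.Eventually.of_forall fun t _ x _ => by
      have h1 : HasFDerivAt (fun x : ℝ => (x, t)) ((ContinuousLinearMap.id ℝ ℝ).prod 0) x :=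
        (hasFDerivAt_id x).prodMk (hasFDerivAt_const t x)
      have h2 := ((hΦ.differentiable (by simp) (x, t)).hasFDerivAt).comp x h1
      simpa [D, Function.comp_def] using h2.hasDerivAt)
  exact key.2

private lemma pp_contDiff {a b : ℝ} (Φ : ℝ × ℝ → ℝ) (hΦ : ContDiff ℝ (⊤:ℕ∞) Φ) :
    ContDiff ℝ (⊤:ℕ∞) (fun x => ∫ t in a..b, Φ (x, t)) := by
  suffices H : ∀ (m : ℕ) (Ψ : ℝ × ℝ → ℝ), ContDiff ℝ (⊤:ℕ∞) Ψ →
      ContDiff ℝ (m : ℕ) (fun x => ∫ t in a..b, Ψ (x, t)) by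
    exact contDiff_infty.mpr fun m => H m Φ hΦ
  intro m
  induction m with
  | zero =>
    intro Ψ hΨ
    rw [show ((0:ℕ) : WithTop ℕ∞) = 0 from rfl, contDiff_zero]
    exact Differentiable.continuous fun x => (pp_hasDerivAt Ψ hΨ x).differentiableAt
  | succ m ih =>
    intro Ψ hΨ
    rw [show ((m+1:ℕ) : WithTop ℕ∞) = (m:ℕ) + 1 by push_cast; ring, contDiff_succ_iff_deriv]
    refine ⟨fun x => (pp_hasDerivAt Ψ hΨ x).differentiableAt, by simp, ?_⟩
    have hd : deriv (fun x => ∫ t in a..b, Ψ (x, t)) =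
        fun x => ∫ t in a..b, (fun p => fderiv ℝ Ψ p (1, 0)) (x, t) := by
      funext x; exact (pp_hasDerivAt Ψ hΨ x).deriv
    rw [hd]
    exact ih _ ((hΨ.fderiv_right (m := (⊤:ℕ∞)) (by exact_mod_cast le_top)).clm_apply contDiff_const)

private lemma pp_vanish : ∀ (k : ℕ) (g : ℝ → ℂ), ContDiff ℝ (⊤:ℕ∞) g →
    ∀ j ≤ k, iteratedDeriv j (fun x : ℝ => (x:ℂ)^(k+1) * g x) 0 = 0 := by
  intro k
  induction k with
  | zero =>
    intro g hg j hj
    interval_cases j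
    simp
  | succ k ih =>
    intro g hg j hj
    match j with
    | 0 => simp
    | (j+1) =>
      rw [iteratedDeriv_succ']
      have hgd : Differentiable ℝ g := hg.differentiable (by simp)
      have hder : deriv (fun x : ℝ => (x:ℂ)^(k+1+1) * g x) =
          fun x : ℝ => (x:ℂ)^(k+1) * (((k:ℂ)+2) * g x + (x:ℂ) * deriv g x) := by
        funext x
        have h1 : HasDerivAt (fun y : ℝ => (y:ℂ)^(k+2)) ((k+2 : ℕ) * (x:ℂ)^(k+2-1)) x :=
          (hasDerivAt_pow (k+2) (x:ℂ)).comp_ofReal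
        have h2 : HasDerivAt g (deriv g x) x := (hgd x).hasDerivAt
        rw [show k+1+1 = k+2 from rfl, (h1.fun_mul h2).deriv]
        rw [show k+2-1 = k+1 from rfl]
        push_cast
        ring
      rw [hder]
      have hg1 : ContDiff ℝ (⊤:ℕ∞) (fun x : ℝ => ((k:ℂ)+2) * g x + (x:ℂ) * deriv g x) := by
        have hdg : ContDiff ℝ (⊤:ℕ∞) (deriv g) := (contDiff_infty_iff_deriv.mp hg).2
        exact (contDiff_const.mul hg).add (Complex.ofRealCLM.contDiff.mul hdg)
      exact ih _ hg1 j (Nat.succ_le_succ_iff.mp hj)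

noncomputable def ppR (N : ℕ) (u : ℝ) : ℝ := ∫ θ in (0:ℝ)..1, Real.exp (θ*u) * (1-θ)^N

lemma ppR_succ (N : ℕ) (u : ℝ) :
    ppR N u = 1/(N+1) + u/(N+1) * ppR (N+1) u := by
  have hvv : ∀ θ : ℝ, HasDerivAt (fun θ : ℝ => -((1-θ)^(N+1)/(N+1))) ((1-θ)^N) θ := by
    intro θ
    have h := ((((hasDerivAt_id θ).const_sub 1).pow (N+1)).div_const ((N:ℝ)+1)).neg
    refine h.congr_deriv ?_
    have : ((N:ℝ)+1) ≠ 0 := by positivity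
    field_simp
    simp
  have huu : ∀ θ : ℝ, HasDerivAt (fun θ : ℝ => Real.exp (θ*u)) (Real.exp (θ*u) * u) θ := by
    intro θ
    simpa using ((hasDerivAt_id θ).mul_const u).exp
  have key := intervalIntegral.integral_mul_deriv_eq_deriv_mul
    (u := fun θ : ℝ => Real.exp (θ*u)) (u' := fun θ : ℝ => Real.exp (θ*u) * u)
    (v := fun θ : ℝ => -((1-θ)^(N+1)/(N+1))) (v' := fun θ : ℝ => (1-θ)^N)
    (a := 0) (b := 1)
    (fun θ _ => huu θ) (fun θ _ => hvv θ)
    (((Real.continuous_exp.comp (continuous_id.mul continuous_const)).mul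
      continuous_const).intervalIntegrable 0 1)
    ((((continuous_const.sub continuous_id).pow N)).intervalIntegrable 0 1)
  rw [ppR, key]
  have h2 : (∫ θ in (0:ℝ)..1, Real.exp (θ*u) * u * -((1-θ)^(N+1)/(N+1)))
      = (-u/(N+1)) * ppR (N+1) u := by
    rw [ppR, ← intervalIntegral.integral_const_mul]
    apply intervalIntegral.integral_congr
    intro θ _
    ring
  rw [h2]
  have : ((N:ℝ)+1) ≠ 0 := by positivity
  field_simp
  simp

lemma pp_exp_taylor (N : ℕ) (u : ℝ) :
    Real.exp u = (∑ m ∈ Finset.range (N+1), u^m/(m.factorial : ℝ))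
      + u^(N+1)/(N.factorial : ℝ) * ppR N u := by
  induction N with
  | zero =>
    rw [ppR]
    have hR : (∫ θ in (0:ℝ)..1, Real.exp (θ*u) * (1-θ)^0) = ∫ θ in (0:ℝ)..1, Real.exp (θ*u) := by
      apply intervalIntegral.integral_congr; intro θ _; simp
    rw [hR]
    simp only [zero_add, Finset.range_one, Finset.sum_singleton, pow_zero, Nat.factorial_zero,
      Nat.cast_one, pow_one, div_one]
    rcases eq_or_ne u 0 with rfl | hu
    · simp
    · rw [intervalIntegral.integral_comp_mul_right (a := (0:ℝ)) (b := 1) Real.exp hu,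
        integral_exp]
      simp only [Real.exp_zero, smul_eq_mul, zero_mul, one_mul]
      field_simp
      ring
  | succ N ih =>
    rw [Finset.sum_range_succ (n := N+1), ih, ppR_succ N u, Nat.factorial_succ]
    have h1 : ((N:ℝ)+1) ≠ 0 := by positivity
    have h2 : ((N.factorial : ℝ)) ≠ 0 := by exact_mod_cast N.factorial_ne_zero
    push_cast
    field_simp
    ring

lemma ppR_contDiff (N : ℕ) : ContDiff ℝ (⊤:ℕ∞) (ppR N) := by
  have : ppR N = fun u => ∫ θ in (0:ℝ)..1,
      (fun p : ℝ × ℝ => Real.exp (p.2 * p.1) * (1 - p.2)^N) (u, θ) := rfl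
  rw [this]
  exact pp_contDiff _ ((Real.contDiff_exp.comp (contDiff_snd.mul contDiff_fst)).mul
    ((contDiff_const.sub contDiff_snd).pow N))

/-- equation (4.8) in the proof of Lemma 4.1 of the paper:
the function `F(ζ) = (-2iζ/(1+ζ²)) ∫₀^T e^{-(T-t)ζ²}(h(t)-h'(t)) dt` is smooth
and its first `2n` derivatives vanish at `ζ = 0`, provided `h` is smooth,
supported in `(0,T)`, with vanishing moments of order `< n`. -/
theorem fourier_moments_vanish
    (T : ℝ) (hT : 0 < T) (n : ℕ) (hn : 0 < n)
    (h : ℝ → ℝ) (hsmooth : ContDiff ℝ (⊤ : ℕ∞) h)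
    (hsupp : Function.support h ⊆ Set.Ioo 0 T)
    (hmom : ∀ k : ℕ, k < n → ∫ t in (0:ℝ)..T, t ^ k * h t = 0)
    (F : ℝ → ℂ)
    (hF : ∀ ζ : ℝ, F ζ = (-2 * Complex.I * (ζ:ℂ) / (1 + (ζ:ℂ)^2)) *
      ((∫ t in (0:ℝ)..T, Real.exp (-(T - t) * ζ^2) * (h t - deriv h t) : ℝ) : ℂ)) :
    ContDiff ℝ (⊤ : ℕ∞) F ∧ ∀ j : ℕ, j ≤ 2 * n → iteratedDeriv j F 0 = 0 := by
  obtain ⟨N, rfl⟩ : ∃ N, n = N + 1 := ⟨n - 1, (Nat.succ_pred_eq_of_pos hn).symm⟩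
  have hdh : ContDiff ℝ (⊤:ℕ∞) (deriv h) := (contDiff_infty_iff_deriv.mp hsmooth).2
  have hgsm : ContDiff ℝ (⊤:ℕ∞) (fun t : ℝ => h t - deriv h t) := hsmooth.sub hdh
  have hgc : Continuous (fun t : ℝ => h t - deriv h t) := hgsm.continuous
  have hdiffh : Differentiable ℝ h := hsmooth.differentiable (by simp)
  have h0 : h 0 = 0 := by
    by_contra hne
    exact absurd (hsupp (Function.mem_support.mpr hne)).1 (lt_irrefl 0)
  have hTe : h T = 0 := by
    by_contra hne
    exact absurd (hsupp (Function.mem_support.mpr hne)).2 (lt_irrefl T)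
  -- moments of h - h'
  have hmomg : ∀ k : ℕ, k < N + 1 → (∫ t in (0:ℝ)..T, t^k * (h t - deriv h t)) = 0 := by
    intro k hk
    have hintdh : ∫ t in (0:ℝ)..T, t^k * deriv h t = 0 := by
      have ibp := intervalIntegral.integral_mul_deriv_eq_deriv_mul
        (u := fun t : ℝ => t^k) (u' := fun t : ℝ => (k:ℝ) * t^(k-1)) (v := h) (v' := deriv h)
        (a := 0) (b := T)
        (fun t _ => hasDerivAt_pow k t) (fun t _ => (hdiffh t).hasDerivAt)
        ((continuous_const.mul (continuous_pow (k-1))).intervalIntegrable 0 T)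
        (hdh.continuous.intervalIntegrable 0 T)
      rw [ibp, hTe, h0]
      have hzero : ∫ t in (0:ℝ)..T, (k:ℝ) * t^(k-1) * h t = 0 := by
        have he : (fun t : ℝ => (k:ℝ)*t^(k-1)*h t) = fun t : ℝ => (k:ℝ) * (t^(k-1)*h t) := by
          funext t; ring
        rw [he, intervalIntegral.integral_const_mul]
        rcases Nat.eq_zero_or_pos k with rfl | hk0
        · simp
        · rw [hmom (k-1) (by omega)]; ring
      rw [hzero]; ring
    have hsub : (∫ t in (0:ℝ)..T, t^k * (h t - deriv h t))
        = (∫ t in (0:ℝ)..T, t^k * h t) - ∫ t in (0:ℝ)..T, t^k * deriv h t := by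
      rw [← intervalIntegral.integral_sub
        (((continuous_pow k).fun_mul hsmooth.continuous).intervalIntegrable 0 T)
        (((continuous_pow k).fun_mul hdh.continuous).intervalIntegrable 0 T)]
      apply intervalIntegral.integral_congr
      intro t _; ring
    rw [hsub, hmom k hk, hintdh, sub_zero]
  -- moments against (-(T-t))^m
  have hmomg2 : ∀ m : ℕ, m < N + 1 →
      (∫ t in (0:ℝ)..T, (-(T-t))^m * (h t - deriv h t)) = 0 := by
    intro m hm
    have hexp : ∀ t : ℝ, (-(T-t))^m * (h t - deriv h t)
        = ∑ i ∈ Finset.range (m+1),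
            ((-T)^(m-i) * (m.choose i : ℝ)) * (t^i * (h t - deriv h t)) := by
      intro t
      rw [show (-(T-t)) = t + (-T) by ring, add_pow, Finset.sum_mul]
      apply Finset.sum_congr rfl
      intro i _
      ring
    rw [intervalIntegral.integral_congr (fun t _ => hexp t),
      intervalIntegral.integral_finset_sum (fun i _ =>
        (continuous_const.fun_mul ((continuous_pow i).fun_mul hgc)).intervalIntegrable 0 T)]
    apply Finset.sum_eq_zero
    intro i hi
    have hi' := Finset.mem_range.mp hi
    rw [intervalIntegral.integral_const_mul, hmomg i (by omega)]
    ring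
  -- the remainder kernel
  set Φ₂ : ℝ × ℝ → ℝ :=
    fun p => (-(T - p.2))^(N+1) * ppR N (-(T - p.2) * p.1^2) * (h p.2 - deriv h p.2) with hΦ₂
  have hΦ₂sm : ContDiff ℝ (⊤:ℕ∞) Φ₂ := by
    refine (ContDiff.mul (ContDiff.mul ?_ ?_) ?_)
    · exact ((contDiff_const.sub contDiff_snd).neg).pow (N+1)
    · exact (ppR_contDiff N).comp
        (((contDiff_const.sub contDiff_snd).neg).mul (contDiff_fst.pow 2))
    · exact hgsm.comp contDiff_snd
  set K : ℝ → ℝ := fun ζ => ∫ t in (0:ℝ)..T, Φ₂ (ζ, t) with hK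
  have hKsm : ContDiff ℝ (⊤:ℕ∞) K := pp_contDiff Φ₂ hΦ₂sm
  have hfact : ((N.factorial : ℝ)) ≠ 0 := by exact_mod_cast N.factorial_ne_zero
  have hΦ₂c : ∀ ζ : ℝ, Continuous (fun t => Φ₂ (ζ, t)) := fun ζ =>
    hΦ₂sm.continuous.comp (continuous_const.prodMk continuous_id)
  -- factorization of the integral
  have hGsplit : ∀ ζ : ℝ, (∫ t in (0:ℝ)..T, Real.exp (-(T - t) * ζ^2) * (h t - deriv h t))
      = ζ^(2*(N+1)) * ((1/(N.factorial : ℝ)) * K ζ) := by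
    intro ζ
    have hcong : ∀ t ∈ uIcc (0:ℝ) T, Real.exp (-(T - t) * ζ^2) * (h t - deriv h t)
        = (∑ m ∈ Finset.range (N+1),
              ((ζ^2)^m/(m.factorial:ℝ)) * ((-(T-t))^m * (h t - deriv h t)))
          + ((ζ^2)^(N+1)/(N.factorial:ℝ)) * Φ₂ (ζ, t) := by
      intro t _
      rw [pp_exp_taylor N (-(T-t)*ζ^2), add_mul, Finset.sum_mul]
      congr 1
      · apply Finset.sum_congr rfl
        intro m _
        rw [mul_pow]
        ring
      · simp only [hΦ₂]
        rw [mul_pow]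
        ring
    have hint1 : IntervalIntegrable (fun t => ∑ m ∈ Finset.range (N+1),
        ((ζ^2)^m/(m.factorial:ℝ)) * ((-(T-t))^m * (h t - deriv h t))) volume 0 T :=
      (continuous_finset_sum _ (fun m _ => continuous_const.mul
        ((((continuous_const.sub continuous_id).neg).pow m).mul hgc))).intervalIntegrable 0 T
    have hint2 : IntervalIntegrable (fun t => ((ζ^2)^(N+1)/(N.factorial:ℝ)) * Φ₂ (ζ, t))
        volume 0 T := (continuous_const.mul (hΦ₂c ζ)).intervalIntegrable 0 T
    rw [intervalIntegral.integral_congr hcong, intervalIntegral.integral_add hint1 hint2,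
      intervalIntegral.integral_finset_sum
        (f := fun (m : ℕ) (t : ℝ) => ((ζ^2)^m/(m.factorial:ℝ)) * ((-(T-t))^m * (h t - deriv h t)))
        (fun m _ =>
        (continuous_const.mul ((((continuous_const.sub continuous_id).neg).pow m).mul
          hgc)).intervalIntegrable 0 T)]
    have hsum0 : ∑ m ∈ Finset.range (N+1), (∫ t in (0:ℝ)..T,
        ((ζ^2)^m/(m.factorial:ℝ)) * ((-(T-t))^m * (h t - deriv h t))) = 0 := by
      apply Finset.sum_eq_zero
      intro m hm
      rw [intervalIntegral.integral_const_mul, hmomg2 m (Finset.mem_range.mp hm)]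
      ring
    rw [hsum0, intervalIntegral.integral_const_mul, zero_add, pow_mul]
    simp only [hK]
    ring
  -- the smooth cofactor
  set H : ℝ → ℂ := fun ζ =>
    (-2 * Complex.I) * ((((1+ζ^2)⁻¹ * ((1/(N.factorial:ℝ)) * K ζ) : ℝ)) : ℂ) with hH
  have hne : ∀ ζ : ℝ, (1 + (ζ:ℂ)^2) ≠ 0 := by
    intro ζ
    have he : (1 + (ζ:ℂ)^2) = ((1 + ζ^2 : ℝ) : ℂ) := by push_cast; ring
    rw [he]
    exact_mod_cast (by positivity : (1:ℝ) + ζ^2 ≠ 0)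
  have hHsm : ContDiff ℝ (⊤:ℕ∞) H := by
    have hinv : ContDiff ℝ (⊤:ℕ∞) (fun ζ : ℝ => (1+ζ^2)⁻¹) :=
      (contDiff_const.add (contDiff_id.pow 2)).inv (fun ζ => by positivity)
    exact contDiff_const.mul
      (Complex.ofRealCLM.contDiff.comp (hinv.mul (contDiff_const.mul hKsm)))
  have hFeq : F = fun ζ : ℝ => ((ζ:ℂ))^(2*(N+1)+1) * H ζ := by
    funext ζ
    rw [hF ζ, hGsplit ζ]
    simp only [hH]
    push_cast
    have := hne ζ
    field_simp
    ring
  constructor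
  · rw [hFeq]
    exact (Complex.ofRealCLM.contDiff.pow _).mul hHsm
  · intro j hj
    rw [hFeq]
    exact pp_vanish (2*(N+1)) H hHsm j (by omega)
end

section
/- Let ε > 0, let W : [0,∞) × [-1,1] → ℝ be smooth with W(t,−1) = W(t,1) = 0 for all t ≥ 0 and W(0,y) = 0 for all y, and let f : [0,∞) × [-1,1] → ℝ be smooth with f(0,·) = 0, such that ∂_t W = ε ∂_{yy} W + f on (0,∞) × (-1,1). Then for every t ≥ 0: (i) (∫_{-1}^{1} (∂_t W(t,y))² dy)^{1/2} ≤ 2 ∫₀^t (∫_{-1}^{1} (∂_s f(s,y))² dy)^{1/2} ds, and (ii) ε (∫_{-1}^{1} (∂_{yy} W(t,y))² dy)^{1/2} ≤ (∫_{-1}^{1} f(t,y)² dy)^{1/2} + 2 ∫₀^t (∫_{-1}^{1} (∂_s f(s,y))² dy)^{1/2} ds. -/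
open MeasureTheory Set Function Topology intervalIntegral

namespace HeatAux

noncomputable section




abbrev Dst : Set (ℝ × ℝ) := Set.Ici (0:ℝ) ×ˢ Set.Icc (-1:ℝ) 1

lemma uniqueDiffOn_Dst : UniqueDiffOn ℝ Dst :=
  (uniqueDiffOn_Ici 0).prod (uniqueDiffOn_Icc (by norm_num))

lemma interior_Dst : interior Dst = Set.Ioi (0:ℝ) ×ˢ Set.Ioo (-1:ℝ) 1 := by
  rw [interior_prod_eq, interior_Ici, interior_Icc]

lemma Dst_subset_closure_interior : Dst ⊆ closure (interior Dst) := by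
  rw [interior_Dst, closure_prod_eq, closure_Ioi, closure_Ioo (by norm_num : (-1:ℝ) ≠ 1)]

lemma Dst_mem_nhds {x : ℝ × ℝ} (hx : x ∈ interior Dst) : Dst ∈ 𝓝 x :=
  mem_interior_iff_mem_nhds.1 hx

def clampD (p : ℝ × ℝ) : ℝ × ℝ := (max p.1 0, max (-1) (min p.2 1))

lemma continuous_clampD : Continuous clampD := by
  unfold clampD; fun_prop

lemma clampD_mem (p : ℝ × ℝ) : clampD p ∈ Dst :=
  ⟨show (0:ℝ) ≤ max p.1 0 from le_max_right _ _, show (-1:ℝ) ≤ max (-1) (min p.2 1) from le_max_left _ _,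
    show max (-1) (min p.2 1) ≤ (1:ℝ) from max_le (by norm_num) (min_le_right _ _)⟩

lemma clampD_eq {p : ℝ × ℝ} (hp : p ∈ Dst) : clampD p = p := by
  obtain ⟨h1, h2, h3⟩ := hp
  unfold clampD
  rw [max_eq_left h1, min_eq_left h3, max_eq_right h2]

lemma continuous_comp_clampD {G : ℝ × ℝ → ℝ} (hG : ContinuousOn G Dst) :
    Continuous (G ∘ clampD) :=
  hG.comp_continuous continuous_clampD clampD_mem

/-- two functions continuous on `Dst` that agree on the interior agree on `Dst`. -/
lemma eqOn_Dst_of_eqOn_interior {g h : ℝ × ℝ → ℝ} (hg : ContinuousOn g Dst)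
    (hh : ContinuousOn h Dst) (he : EqOn g h (interior Dst)) : EqOn g h Dst := by
  have hgc := continuous_comp_clampD hg
  have hhc := continuous_comp_clampD hh
  have he' : EqOn (g ∘ clampD) (h ∘ clampD) (interior Dst) := by
    intro x hx
    simp only [comp_apply, clampD_eq (interior_subset hx)]
    exact he hx
  have hcl : EqOn (g ∘ clampD) (h ∘ clampD) (closure (interior Dst)) :=
    he'.closure hgc hhc
  intro x hx
  have := hcl (Dst_subset_closure_interior hx)
  simpa only [comp_apply, clampD_eq hx] using this

def pT (F : ℝ × ℝ → ℝ) (x : ℝ × ℝ) : ℝ := fderivWithin ℝ F Dst x (1, 0)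

def pY (F : ℝ × ℝ → ℝ) (x : ℝ × ℝ) : ℝ := fderivWithin ℝ F Dst x (0, 1)

lemma contDiffOn_pT {F : ℝ × ℝ → ℝ} (hF : ContDiffOn ℝ (⊤ : ℕ∞) F Dst) :
    ContDiffOn ℝ (⊤ : ℕ∞) (pT F) Dst := by
  have h1 : ContDiffOn ℝ (⊤ : ℕ∞) (fderivWithin ℝ F Dst) Dst :=
    hF.fderivWithin uniqueDiffOn_Dst (by simp)
  exact (ContinuousLinearMap.apply ℝ ℝ ((1:ℝ), (0:ℝ))).contDiff.comp_contDiffOn h1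

lemma contDiffOn_pY {F : ℝ × ℝ → ℝ} (hF : ContDiffOn ℝ (⊤ : ℕ∞) F Dst) :
    ContDiffOn ℝ (⊤ : ℕ∞) (pY F) Dst := by
  have h1 : ContDiffOn ℝ (⊤ : ℕ∞) (fderivWithin ℝ F Dst) Dst :=
    hF.fderivWithin uniqueDiffOn_Dst (by simp)
  exact (ContinuousLinearMap.apply ℝ ℝ ((0:ℝ), (1:ℝ))).contDiff.comp_contDiffOn h1

variable {F : ℝ × ℝ → ℝ}

lemma hasDerivWithinAt_sliceT (hF : ContDiffOn ℝ (⊤ : ℕ∞) F Dst) {t y : ℝ}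
    (ht : t ∈ Set.Ici (0:ℝ)) (hy : y ∈ Set.Icc (-1:ℝ) 1) :
    HasDerivWithinAt (fun τ => F (τ, y)) (pT F (t, y)) (Set.Ici 0) t := by
  have hmem : (t, y) ∈ Dst := ⟨ht, hy⟩
  have hd : HasFDerivWithinAt F (fderivWithin ℝ F Dst (t, y)) Dst (t, y) :=
    (hF.differentiableOn (by simp) (t, y) hmem).hasFDerivWithinAt
  have hc : HasDerivWithinAt (fun τ : ℝ => ((τ, y) : ℝ × ℝ)) ((1 : ℝ), (0 : ℝ)) (Set.Ici 0) t :=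
    ((hasDerivAt_id t).prodMk (hasDerivAt_const t y)).hasDerivWithinAt
  have hmaps : Set.MapsTo (fun τ : ℝ => ((τ, y) : ℝ × ℝ)) (Set.Ici 0) Dst :=
    fun τ hτ => ⟨hτ, hy⟩
  exact hd.comp_hasDerivWithinAt t hc hmaps

lemma hasDerivWithinAt_sliceY (hF : ContDiffOn ℝ (⊤ : ℕ∞) F Dst) {t y : ℝ}
    (ht : t ∈ Set.Ici (0:ℝ)) (hy : y ∈ Set.Icc (-1:ℝ) 1) :
    HasDerivWithinAt (fun σ => F (t, σ)) (pY F (t, y)) (Set.Icc (-1) 1) y := by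
  have hmem : (t, y) ∈ Dst := ⟨ht, hy⟩
  have hd : HasFDerivWithinAt F (fderivWithin ℝ F Dst (t, y)) Dst (t, y) :=
    (hF.differentiableOn (by simp) (t, y) hmem).hasFDerivWithinAt
  have hc : HasDerivWithinAt (fun σ : ℝ => ((t, σ) : ℝ × ℝ)) ((0 : ℝ), (1 : ℝ))
      (Set.Icc (-1) 1) y :=
    ((hasDerivAt_const y t).prodMk (hasDerivAt_id y)).hasDerivWithinAt
  have hmaps : Set.MapsTo (fun σ : ℝ => ((t, σ) : ℝ × ℝ)) (Set.Icc (-1) 1) Dst :=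
    fun σ hσ => ⟨ht, hσ⟩
  exact hd.comp_hasDerivWithinAt y hc hmaps

lemma hasDerivAt_sliceT (hF : ContDiffOn ℝ (⊤ : ℕ∞) F Dst) {t y : ℝ}
    (ht : 0 < t) (hy : y ∈ Set.Icc (-1:ℝ) 1) :
    HasDerivAt (fun τ => F (τ, y)) (pT F (t, y)) t :=
  (hasDerivWithinAt_sliceT hF (le_of_lt ht) hy).hasDerivAt (Ici_mem_nhds ht)

lemma hasDerivAt_sliceY (hF : ContDiffOn ℝ (⊤ : ℕ∞) F Dst) {t y : ℝ}
    (ht : t ∈ Set.Ici (0:ℝ)) (hy : y ∈ Set.Ioo (-1:ℝ) 1) :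
    HasDerivAt (fun σ => F (t, σ)) (pY F (t, y)) y :=
  (hasDerivWithinAt_sliceY hF ht (Set.Ioo_subset_Icc_self hy)).hasDerivAt
    (Icc_mem_nhds hy.1 hy.2)

lemma pT_eq_zero (hF : ContDiffOn ℝ (⊤ : ℕ∞) F Dst) {t y : ℝ}
    (ht : t ∈ Set.Ici (0:ℝ)) (hy : y ∈ Set.Icc (-1:ℝ) 1)
    (h0 : ∀ τ ∈ Set.Ici (0:ℝ), F (τ, y) = 0) : pT F (t, y) = 0 := by
  have h1 := hasDerivWithinAt_sliceT hF ht hy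
  have h2 : HasDerivWithinAt (fun τ => F (τ, y)) 0 (Set.Ici 0) t :=
    (hasDerivWithinAt_const t _ (0:ℝ)).congr h0 (h0 t ht)
  have hu : UniqueDiffWithinAt ℝ (Set.Ici (0:ℝ)) t := uniqueDiffOn_Ici 0 t ht
  rw [← h1.derivWithin hu]; exact h2.derivWithin hu

lemma pY_eq_zero (hF : ContDiffOn ℝ (⊤ : ℕ∞) F Dst) {t y : ℝ}
    (ht : t ∈ Set.Ici (0:ℝ)) (hy : y ∈ Set.Icc (-1:ℝ) 1)
    (h0 : ∀ σ ∈ Set.Icc (-1:ℝ) 1, F (t, σ) = 0) : pY F (t, y) = 0 := by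
  have h1 := hasDerivWithinAt_sliceY hF ht hy
  have h2 : HasDerivWithinAt (fun σ => F (t, σ)) 0 (Set.Icc (-1) 1) y :=
    (hasDerivWithinAt_const y _ (0:ℝ)).congr h0 (h0 y hy)
  have hu : UniqueDiffWithinAt ℝ (Set.Icc (-1:ℝ) 1) y :=
    uniqueDiffOn_Icc (by norm_num) y hy
  rw [← h1.derivWithin hu]; exact h2.derivWithin hu

lemma pT_eq_fderiv {x : ℝ × ℝ} (hx : x ∈ interior Dst) :
    pT F x = fderiv ℝ F x (1, 0) := by
  rw [pT, fderivWithin_of_mem_nhds (Dst_mem_nhds hx)]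

lemma pY_eq_fderiv {x : ℝ × ℝ} (hx : x ∈ interior Dst) :
    pY F x = fderiv ℝ F x (0, 1) := by
  rw [pY, fderivWithin_of_mem_nhds (Dst_mem_nhds hx)]

lemma contDiffAt_of_mem_interior (hF : ContDiffOn ℝ (⊤ : ℕ∞) F Dst) {x : ℝ × ℝ}
    (hx : x ∈ interior Dst) : ContDiffAt ℝ (⊤ : ℕ∞) F x :=
  hF.contDiffAt (Dst_mem_nhds hx)

/-- Clairaut / Schwarz symmetry of mixed partials on the interior. -/
lemma clairaut (hF : ContDiffOn ℝ (⊤ : ℕ∞) F Dst) {x : ℝ × ℝ}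
    (hx : x ∈ interior Dst) : pT (pY F) x = pY (pT F) x := by
  have hopen : IsOpen (interior Dst) := isOpen_interior
  -- eventually differentiable with derivative fderiv
  have hev : ∀ᶠ z in 𝓝 x, HasFDerivAt F (fderiv ℝ F z) z := by
    filter_upwards [hopen.mem_nhds hx] with z hz
    exact ((contDiffAt_of_mem_interior hF hz).differentiableAt (by simp)).hasFDerivAt
  have h2 : ContDiffAt ℝ 2 F x := (contDiffAt_of_mem_interior hF hx).of_le (by exact WithTop.coe_le_coe.2 (le_top : (2:ℕ∞) ≤ ⊤))
  have hf' : ContDiffAt ℝ 1 (fderiv ℝ F) x := h2.fderiv_right (by norm_num)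
  have hx2 : HasFDerivAt (fderiv ℝ F) (fderiv ℝ (fderiv ℝ F) x) x :=
    (hf'.differentiableAt one_ne_zero).hasFDerivAt
  set f'' := fderiv ℝ (fderiv ℝ F) x with hf''
  have hsym := second_derivative_symmetric_of_eventually hev hx2
  -- identify pT (pY F) x with f'' (1,0) (0,1)
  have happT : ∀ v : ℝ × ℝ, HasFDerivAt (fun z => fderiv ℝ F z v)
      ((ContinuousLinearMap.apply ℝ ℝ v).comp f'') x :=
    fun v => (ContinuousLinearMap.apply ℝ ℝ v).hasFDerivAt.comp x hx2
  have key : ∀ v w : ℝ × ℝ,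
      fderiv ℝ (fun z => fderiv ℝ F z v) x w = f'' w v := by
    intro v w
    rw [(happT v).fderiv]
    simp
  -- pY F agrees with z ↦ fderiv F z (0,1) near x
  have hePY : (pY F) =ᶠ[𝓝 x] (fun z => fderiv ℝ F z (0, 1)) := by
    filter_upwards [hopen.mem_nhds hx] with z hz
    exact pY_eq_fderiv hz
  have hePT : (pT F) =ᶠ[𝓝 x] (fun z => fderiv ℝ F z (1, 0)) := by
    filter_upwards [hopen.mem_nhds hx] with z hz
    exact pT_eq_fderiv hz
  calc pT (pY F) x = fderiv ℝ (pY F) x (1, 0) := pT_eq_fderiv hx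
    _ = fderiv ℝ (fun z => fderiv ℝ F z (0, 1)) x (1, 0) := by rw [hePY.fderiv_eq]
    _ = f'' (1, 0) (0, 1) := key _ _
    _ = f'' (0, 1) (1, 0) := hsym _ _
    _ = fderiv ℝ (fun z => fderiv ℝ F z (1, 0)) x (0, 1) := (key _ _).symm
    _ = fderiv ℝ (pT F) x (0, 1) := by rw [hePT.fderiv_eq]
    _ = pY (pT F) x := (pY_eq_fderiv hx).symm




lemma cs_integral (a b : ℝ → ℝ) (ha : Continuous a) (hb : Continuous b) :
    (∫ y in (-1:ℝ)..1, a y * b y) ≤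
      Real.sqrt (∫ y in (-1:ℝ)..1, (a y) ^ 2) * Real.sqrt (∫ y in (-1:ℝ)..1, (b y) ^ 2) := by
  set A := ∫ y in (-1:ℝ)..1, (a y) ^ 2 with hA
  set B := ∫ y in (-1:ℝ)..1, (b y) ^ 2 with hB
  set C := ∫ y in (-1:ℝ)..1, a y * b y with hC
  have hA0 : 0 ≤ A := intervalIntegral.integral_nonneg (by norm_num) (fun y _ => sq_nonneg _)
  have hB0 : 0 ≤ B := intervalIntegral.integral_nonneg (by norm_num) (fun y _ => sq_nonneg _)
  have key : ∀ lam : ℝ, 0 ≤ lam ^ 2 * A + 2 * lam * C + B := by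
    intro lam
    have h1 : (0:ℝ) ≤ ∫ y in (-1:ℝ)..1, (lam * a y + b y) ^ 2 :=
      intervalIntegral.integral_nonneg (by norm_num) (fun y _ => sq_nonneg _)
    have h2 : (∫ y in (-1:ℝ)..1, (lam * a y + b y) ^ 2) =
        lam ^ 2 * A + 2 * lam * C + B := by
      have heq : (fun y => (lam * a y + b y) ^ 2) =
          fun y => lam ^ 2 * (a y) ^ 2 + (2 * lam) * (a y * b y) + (b y) ^ 2 := by
        funext y; ring
      rw [heq]
      rw [intervalIntegral.integral_add (f := fun y => lam ^ 2 * a y ^ 2 + 2 * lam * (a y * b y))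
            (g := fun y => b y ^ 2) ((continuous_const.mul (ha.pow 2)).add
            (continuous_const.mul (ha.mul hb)) |>.intervalIntegrable _ _)
          ((hb.pow 2).intervalIntegrable _ _),
        intervalIntegral.integral_add (f := fun y => lam ^ 2 * a y ^ 2)
          (g := fun y => 2 * lam * (a y * b y)) ((continuous_const.mul (ha.pow 2)).intervalIntegrable _ _)
          ((continuous_const.mul (ha.mul hb)).intervalIntegrable _ _),
        intervalIntegral.integral_const_mul, intervalIntegral.integral_const_mul]
    linarith [h2 ▸ h1]
  rcases eq_or_lt_of_le hA0 with hAz | hApos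
  · -- A = 0 : show C = 0
    have hCz : C = 0 := by
      by_contra hC0
      have hk := key (-(B + 1) / (2 * C))
      have harith : 2 * (-(B + 1) / (2 * C)) * C = -(B + 1) := by
        field_simp
      rw [← hAz, mul_zero, zero_add, harith] at hk
      linarith
    rw [hCz]
    positivity
  · have hk := key (-C / A)
    have hAne : A ≠ 0 := ne_of_gt hApos
    have he : (-C / A) ^ 2 * A + 2 * (-C / A) * C + B = B - C ^ 2 / A := by
      field_simp; ring
    rw [he] at hk
    have hdiv : C ^ 2 / A ≤ B := by linarith
    have : C ^ 2 ≤ A * B := by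
      have := (div_le_iff₀ hApos).1 hdiv
      linarith [this, mul_comm B A]
    calc C ≤ |C| := le_abs_self C
      _ = Real.sqrt (C ^ 2) := (Real.sqrt_sq_eq_abs C).symm
      _ ≤ Real.sqrt (A * B) := Real.sqrt_le_sqrt this
      _ = Real.sqrt A * Real.sqrt B := Real.sqrt_mul hA0 B

lemma minkowski_integral (a b : ℝ → ℝ) (ha : Continuous a) (hb : Continuous b) :
    Real.sqrt (∫ y in (-1:ℝ)..1, (a y - b y) ^ 2) ≤
      Real.sqrt (∫ y in (-1:ℝ)..1, (a y) ^ 2) + Real.sqrt (∫ y in (-1:ℝ)..1, (b y) ^ 2) := by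
  set A := ∫ y in (-1:ℝ)..1, (a y) ^ 2 with hA
  set B := ∫ y in (-1:ℝ)..1, (b y) ^ 2 with hB
  have hA0 : 0 ≤ A := intervalIntegral.integral_nonneg (by norm_num) (fun y _ => sq_nonneg _)
  have hB0 : 0 ≤ B := intervalIntegral.integral_nonneg (by norm_num) (fun y _ => sq_nonneg _)
  have hcs : (∫ y in (-1:ℝ)..1, a y * (-b y)) ≤ Real.sqrt A * Real.sqrt B := by
    have := cs_integral a (fun y => -b y) ha hb.neg
    simpa [neg_sq] using this
  have hexp : (∫ y in (-1:ℝ)..1, (a y - b y) ^ 2) =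
      A + 2 * (∫ y in (-1:ℝ)..1, a y * (-b y)) + B := by
    have heq : (fun y => (a y - b y) ^ 2) =
        fun y => (a y) ^ 2 + 2 * (a y * (-b y)) + (b y) ^ 2 := by
      funext y; ring
    rw [heq]
    rw [intervalIntegral.integral_add (f := fun y => a y ^ 2 + 2 * (a y * -b y))
          (g := fun y => b y ^ 2) (((ha.pow 2)).add
          (continuous_const.mul (ha.mul hb.neg)) |>.intervalIntegrable _ _)
        ((hb.pow 2).intervalIntegrable _ _),
      intervalIntegral.integral_add (f := fun y => a y ^ 2) (g := fun y => 2 * (a y * -b y))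
        ((ha.pow 2).intervalIntegrable _ _)
        ((continuous_const.mul (ha.mul hb.neg)).intervalIntegrable _ _),
      intervalIntegral.integral_const_mul]
  have hle : (∫ y in (-1:ℝ)..1, (a y - b y) ^ 2) ≤ (Real.sqrt A + Real.sqrt B) ^ 2 := by
    rw [hexp]
    have e1 : Real.sqrt A ^ 2 = A := Real.sq_sqrt hA0
    have e2 : Real.sqrt B ^ 2 = B := Real.sq_sqrt hB0
    nlinarith [hcs]
  calc Real.sqrt (∫ y in (-1:ℝ)..1, (a y - b y) ^ 2)
      ≤ Real.sqrt ((Real.sqrt A + Real.sqrt B) ^ 2) := Real.sqrt_le_sqrt hle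
    _ = |Real.sqrt A + Real.sqrt B| := Real.sqrt_sq_eq_abs _
    _ = Real.sqrt A + Real.sqrt B := abs_of_nonneg (by positivity)


/-! ### Specific functions for the heat problem -/

section Heat

variable (W f : ℝ → ℝ → ℝ)

def cA1 : ℝ × ℝ → ℝ := fun p => pT (uncurry W) (clampD p)
def cA2 : ℝ × ℝ → ℝ := fun p => pY (uncurry W) (clampD p)
def cB2 : ℝ × ℝ → ℝ := fun p => pY (pY (uncurry W)) (clampD p)
def cVt : ℝ × ℝ → ℝ := fun p => pT (pT (uncurry W)) (clampD p)
def cVy : ℝ × ℝ → ℝ := fun p => pY (pT (uncurry W)) (clampD p)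
def cVyy : ℝ × ℝ → ℝ := fun p => pY (pY (pT (uncurry W))) (clampD p)
def cF : ℝ × ℝ → ℝ := fun p => uncurry f (clampD p)
def cFt : ℝ × ℝ → ℝ := fun p => pT (uncurry f) (clampD p)

def Ef : ℝ → ℝ := fun s => ∫ y in (-1:ℝ)..1, (cA1 W (s, y)) ^ 2
def Rf : ℝ → ℝ := fun s => ∫ y in (-1:ℝ)..1, 2 * cA1 W (s, y) * cVt W (s, y)
def Phif : ℝ → ℝ := fun s => Real.sqrt (∫ y in (-1:ℝ)..1, (cFt f (s, y)) ^ 2)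

variable {W f}
variable (hW : ContDiffOn ℝ (⊤ : ℕ∞) (uncurry W) Dst)
variable (hf : ContDiffOn ℝ (⊤ : ℕ∞) (uncurry f) Dst)

lemma comp_clampD_eq (G : ℝ × ℝ → ℝ) {p : ℝ × ℝ} (hp : p ∈ Dst) :
    G (clampD p) = G p := by rw [clampD_eq hp]

section continuity

include hW

lemma cont_cA1 : Continuous (cA1 W) :=
  continuous_comp_clampD (contDiffOn_pT hW).continuousOn

lemma cont_cB2 : Continuous (cB2 W) :=
  continuous_comp_clampD (contDiffOn_pY (contDiffOn_pY hW)).continuousOn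

lemma cont_cVt : Continuous (cVt W) :=
  continuous_comp_clampD (contDiffOn_pT (contDiffOn_pT hW)).continuousOn

lemma cont_cVy : Continuous (cVy W) :=
  continuous_comp_clampD (contDiffOn_pY (contDiffOn_pT hW)).continuousOn

lemma cont_cVyy : Continuous (cVyy W) :=
  continuous_comp_clampD (contDiffOn_pY (contDiffOn_pY (contDiffOn_pT hW))).continuousOn

end continuity

lemma cont_cF (hf : ContDiffOn ℝ (⊤ : ℕ∞) (uncurry f) Dst) : Continuous (cF f) :=
  continuous_comp_clampD hf.continuousOn

lemma cont_cFt (hf : ContDiffOn ℝ (⊤ : ℕ∞) (uncurry f) Dst) : Continuous (cFt f) :=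
  continuous_comp_clampD (contDiffOn_pT hf).continuousOn

/-- derivative in `t` of `W` at interior points, as stated via `deriv`. -/
lemma deriv_slice_W (hW : ContDiffOn ℝ (⊤ : ℕ∞) (uncurry W) Dst) {t y : ℝ} (ht : 0 < t)
    (hy : y ∈ Set.Icc (-1:ℝ) 1) :
    deriv (fun τ => W τ y) t = pT (uncurry W) (t, y) :=
  (hasDerivAt_sliceT hW ht hy).deriv

/-- second spatial derivative of `W` at interior points. -/
lemma iteratedDeriv_slice_W (hW : ContDiffOn ℝ (⊤ : ℕ∞) (uncurry W) Dst) {t y : ℝ}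
    (ht : 0 ≤ t) (hy : y ∈ Set.Ioo (-1:ℝ) 1) :
    iteratedDeriv 2 (W t) y = pY (pY (uncurry W)) (t, y) := by
  have h1 : deriv (W t) =ᶠ[𝓝 y] fun σ => pY (uncurry W) (t, σ) := by
    filter_upwards [isOpen_Ioo.mem_nhds hy] with σ hσ
    exact (hasDerivAt_sliceY hW ht hσ).deriv
  rw [iteratedDeriv_succ, iteratedDeriv_one, h1.deriv_eq]
  exact (hasDerivAt_sliceY (contDiffOn_pY hW) ht hy).deriv

end Heat

section HeatEq

variable {W f : ℝ → ℝ → ℝ} {ε : ℝ}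

/-- The heat equation extends to all of `Dst` for the `fderivWithin`-based partials. -/
lemma heat_on_Dst (hW : ContDiffOn ℝ (⊤ : ℕ∞) (uncurry W) Dst)
    (hf : ContDiffOn ℝ (⊤ : ℕ∞) (uncurry f) Dst)
    (hheat : ∀ t > (0:ℝ), ∀ y ∈ Set.Ioo (-1:ℝ) 1,
      deriv (fun τ => W τ y) t = ε * iteratedDeriv 2 (W t) y + f t y) :
    ∀ x ∈ Dst, pT (uncurry W) x = ε * pY (pY (uncurry W)) x + uncurry f x := by
  have hcont1 : ContinuousOn (pT (uncurry W)) Dst := (contDiffOn_pT hW).continuousOn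
  have hcont2 : ContinuousOn (fun x => ε * pY (pY (uncurry W)) x + uncurry f x) Dst :=
    ((continuousOn_const.mul (contDiffOn_pY (contDiffOn_pY hW)).continuousOn).add
      hf.continuousOn)
  apply eqOn_Dst_of_eqOn_interior hcont1 hcont2
  intro x hx
  obtain ⟨t, y⟩ := x
  rw [interior_Dst] at hx
  obtain ⟨ht, hy⟩ := hx
  have ht' : (0:ℝ) < t := ht
  have h1 := deriv_slice_W hW ht' (Set.Ioo_subset_Icc_self hy)
  have h2 := iteratedDeriv_slice_W hW ht'.le hy
  have h3 := hheat t ht' y hy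
  rw [h1, h2] at h3
  exact h3

/-- boundary values of the time-derivative vanish. -/
lemma pT_boundary (hW : ContDiffOn ℝ (⊤ : ℕ∞) (uncurry W) Dst)
    (hWbc : ∀ t ≥ (0:ℝ), W t (-1) = 0 ∧ W t 1 = 0) {s : ℝ} (hs : 0 ≤ s) :
    pT (uncurry W) (s, 1) = 0 ∧ pT (uncurry W) (s, -1) = 0 :=
  ⟨pT_eq_zero hW hs (by norm_num) (fun τ hτ => (hWbc τ hτ).2),
   pT_eq_zero hW hs (by norm_num) (fun τ hτ => (hWbc τ hτ).1)⟩

/-- initial value of the time-derivative vanishes. -/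
lemma pT_initial (hW : ContDiffOn ℝ (⊤ : ℕ∞) (uncurry W) Dst)
    (hf : ContDiffOn ℝ (⊤ : ℕ∞) (uncurry f) Dst)
    (hWic : ∀ y : ℝ, W 0 y = 0) (hfic : ∀ y : ℝ, f 0 y = 0)
    (hheat : ∀ t > (0:ℝ), ∀ y ∈ Set.Ioo (-1:ℝ) 1,
      deriv (fun τ => W τ y) t = ε * iteratedDeriv 2 (W t) y + f t y)
    {y : ℝ} (hy : y ∈ Set.Icc (-1:ℝ) 1) :
    pT (uncurry W) (0, y) = 0 := by
  have hA2z : ∀ σ ∈ Set.Icc (-1:ℝ) 1, pY (uncurry W) (0, σ) = 0 := fun σ hσ =>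
    pY_eq_zero hW self_mem_Ici hσ (fun σ' _ => hWic σ')
  have hB2z : pY (pY (uncurry W)) (0, y) = 0 :=
    pY_eq_zero (contDiffOn_pY hW) self_mem_Ici hy (fun σ' hσ' => hA2z σ' hσ')
  have := heat_on_Dst hW hf hheat (0, y) ⟨self_mem_Ici, hy⟩
  rw [hB2z] at this
  have hfy : uncurry f (0, y) = 0 := hfic y
  rw [hfy] at this
  simpa using this

/-- the differentiated heat equation, on all of `Dst`. -/
lemma Veq_on_Dst (hW : ContDiffOn ℝ (⊤ : ℕ∞) (uncurry W) Dst)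
    (hf : ContDiffOn ℝ (⊤ : ℕ∞) (uncurry f) Dst)
    (hheat : ∀ t > (0:ℝ), ∀ y ∈ Set.Ioo (-1:ℝ) 1,
      deriv (fun τ => W τ y) t = ε * iteratedDeriv 2 (W t) y + f t y) :
    ∀ x ∈ Dst, pT (pT (uncurry W)) x =
      ε * pY (pY (pT (uncurry W))) x + pT (uncurry f) x := by
  have hswap3 : ∀ x ∈ interior Dst,
      pT (pY (pY (uncurry W))) x = pY (pY (pT (uncurry W))) x := by
    intro x hx
    have h1 : pT (pY (pY (uncurry W))) x = pY (pT (pY (uncurry W))) x :=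
      clairaut (contDiffOn_pY hW) hx
    have h2 : pY (pT (pY (uncurry W))) x = pY (pY (pT (uncurry W))) x := by
      rw [pY_eq_fderiv hx, pY_eq_fderiv hx]
      have he : pT (pY (uncurry W)) =ᶠ[𝓝 x] pY (pT (uncurry W)) := by
        filter_upwards [isOpen_interior.mem_nhds hx] with z hz
        exact clairaut hW hz
      rw [he.fderiv_eq]
    rw [h1, h2]
  have hcont1 : ContinuousOn (pT (pT (uncurry W))) Dst :=
    (contDiffOn_pT (contDiffOn_pT hW)).continuousOn
  have hcont2 : ContinuousOn
      (fun x => ε * pY (pY (pT (uncurry W))) x + pT (uncurry f) x) Dst :=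
    ((continuousOn_const.mul
        (contDiffOn_pY (contDiffOn_pY (contDiffOn_pT hW))).continuousOn).add
      (contDiffOn_pT hf).continuousOn)
  apply eqOn_Dst_of_eqOn_interior hcont1 hcont2
  intro x hx
  have hnh : Dst ∈ 𝓝 x := Dst_mem_nhds hx
  have hee : pT (uncurry W) =ᶠ[𝓝 x]
      (fun z => ε * pY (pY (uncurry W)) z + uncurry f z) := by
    filter_upwards [hnh] with z hz
    exact heat_on_Dst hW hf hheat z hz
  have hdB : DifferentiableAt ℝ (pY (pY (uncurry W))) x :=
    ((contDiffOn_pY (contDiffOn_pY hW)).contDiffAt hnh).differentiableAt (by simp)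
  have hdF : DifferentiableAt ℝ (uncurry f) x :=
    (hf.contDiffAt hnh).differentiableAt (by simp)
  have hRHS : HasFDerivAt (fun z => ε * pY (pY (uncurry W)) z + uncurry f z)
      (ε • fderiv ℝ (pY (pY (uncurry W))) x + fderiv ℝ (uncurry f) x) x :=
    (hdB.hasFDerivAt.const_mul ε).add hdF.hasFDerivAt
  calc pT (pT (uncurry W)) x = fderiv ℝ (pT (uncurry W)) x (1, 0) := pT_eq_fderiv hx
    _ = fderiv ℝ (fun z => ε * pY (pY (uncurry W)) z + uncurry f z) x (1, 0) := by
        rw [hee.fderiv_eq]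
    _ = ε * fderiv ℝ (pY (pY (uncurry W))) x (1, 0) + fderiv ℝ (uncurry f) x (1, 0) := by
        rw [hRHS.fderiv]; simp
    _ = ε * pT (pY (pY (uncurry W))) x + pT (uncurry f) x := by
        rw [← pT_eq_fderiv hx, ← pT_eq_fderiv hx]
    _ = ε * pY (pY (pT (uncurry W))) x + pT (uncurry f) x := by rw [hswap3 x hx]

end HeatEq

section Energy

variable {W f : ℝ → ℝ → ℝ} {ε : ℝ}

lemma hasDerivAt_clamped_t {G : ℝ × ℝ → ℝ} (hG : ContDiffOn ℝ (⊤ : ℕ∞) G Dst) {x y : ℝ}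
    (hx : 0 < x) (hy : y ∈ Set.Icc (-1:ℝ) 1) :
    HasDerivAt (fun τ => G (clampD (τ, y))) (pT G (clampD (x, y))) x := by
  have hmem : ((x, y) : ℝ × ℝ) ∈ Dst := ⟨hx.le, hy⟩
  have hee : (fun τ => G (clampD (τ, y))) =ᶠ[𝓝 x] (fun τ => G (τ, y)) := by
    filter_upwards [eventually_gt_nhds hx] with τ hτ
    rw [clampD_eq (p := (τ, y)) ⟨hτ.le, hy⟩]
  rw [clampD_eq hmem]
  exact (hasDerivAt_sliceT hG hx hy).congr_of_eventuallyEq hee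

lemma hasDerivAt_clamped_y {G : ℝ × ℝ → ℝ} (hG : ContDiffOn ℝ (⊤ : ℕ∞) G Dst) {x y : ℝ}
    (hx : 0 ≤ x) (hy : y ∈ Set.Ioo (-1:ℝ) 1) :
    HasDerivAt (fun σ => G (clampD (x, σ))) (pY G (clampD (x, y))) y := by
  have hmem : ((x, y) : ℝ × ℝ) ∈ Dst := ⟨hx, Set.Ioo_subset_Icc_self hy⟩
  have hee : (fun σ => G (clampD (x, σ))) =ᶠ[𝓝 y] (fun σ => G (x, σ)) := by
    filter_upwards [isOpen_Ioo.mem_nhds hy] with σ hσ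
    rw [clampD_eq (p := (x, σ)) ⟨hx, Set.Ioo_subset_Icc_self hσ⟩]
  rw [clampD_eq hmem]
  exact (hasDerivAt_sliceY hG hx hy).congr_of_eventuallyEq hee

lemma cont_Ef (hW : ContDiffOn ℝ (⊤ : ℕ∞) (uncurry W) Dst) : Continuous (Ef W) :=
  intervalIntegral.continuous_parametric_intervalIntegral_of_continuous' (μ := volume)
    (f := fun s y => (cA1 W (s, y)) ^ 2) (((cont_cA1 hW).pow 2).congr fun _ => rfl) (-1) 1

lemma cont_Rf (hW : ContDiffOn ℝ (⊤ : ℕ∞) (uncurry W) Dst) : Continuous (Rf W) :=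
  intervalIntegral.continuous_parametric_intervalIntegral_of_continuous' (μ := volume)
    (f := fun s y => 2 * cA1 W (s, y) * cVt W (s, y))
    (((continuous_const.mul (cont_cA1 hW)).mul (cont_cVt hW)).congr fun _ => rfl) (-1) 1

lemma cont_Phif (hf : ContDiffOn ℝ (⊤ : ℕ∞) (uncurry f) Dst) : Continuous (Phif f) :=
  Real.continuous_sqrt.comp
    (intervalIntegral.continuous_parametric_intervalIntegral_of_continuous' (μ := volume)
      (f := fun s y => (cFt f (s, y)) ^ 2) (((cont_cFt hf).pow 2).congr fun _ => rfl) (-1) 1)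

lemma Ef_nonneg (s : ℝ) : 0 ≤ Ef W s :=
  intervalIntegral.integral_nonneg (by norm_num) (fun y _ => sq_nonneg _)

lemma Phif_nonneg (s : ℝ) : 0 ≤ Phif f s := Real.sqrt_nonneg _

lemma Ef_zero (hW : ContDiffOn ℝ (⊤ : ℕ∞) (uncurry W) Dst)
    (hf : ContDiffOn ℝ (⊤ : ℕ∞) (uncurry f) Dst)
    (hWic : ∀ y : ℝ, W 0 y = 0) (hfic : ∀ y : ℝ, f 0 y = 0)
    (hheat : ∀ t > (0:ℝ), ∀ y ∈ Set.Ioo (-1:ℝ) 1,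
      deriv (fun τ => W τ y) t = ε * iteratedDeriv 2 (W t) y + f t y) :
    Ef W 0 = 0 := by
  have hEq : EqOn (fun y => (cA1 W (0, y)) ^ 2) (fun _ => (0:ℝ)) (Set.uIcc (-1) 1) := by
    intro y hy
    rw [Set.uIcc_of_le (by norm_num : (-1:ℝ) ≤ 1)] at hy
    have h1 : cA1 W (0, y) = pT (uncurry W) (0, y) := by
      show pT (uncurry W) (clampD (0, y)) = _
      rw [clampD_eq ⟨self_mem_Ici, hy⟩]
    simp only [h1, pT_initial (ε := ε) hW hf hWic hfic hheat hy]
    norm_num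
  show (∫ y in (-1:ℝ)..1, (cA1 W (0, y)) ^ 2) = 0
  rw [intervalIntegral.integral_congr hEq]
  simp

lemma hasDerivAt_Ef (hW : ContDiffOn ℝ (⊤ : ℕ∞) (uncurry W) Dst) {s : ℝ} (hs : 0 < s) :
    HasDerivAt (Ef W) (Rf W s) s := by
  have hr : Continuous (fun p : ℝ × ℝ => 2 * cA1 W p * cVt W p) :=
    (continuous_const.mul (cont_cA1 hW)).mul (cont_cVt hW)
  obtain ⟨M, hM⟩ :=
    ((isCompact_Icc.prod isCompact_Icc) :
      IsCompact ((Set.Icc (s/2) (3*s/2)) ×ˢ (Set.Icc (-1:ℝ) 1))).exists_bound_of_continuousOn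
      hr.continuousOn
  have hae1 : ∀ᵐ y : ℝ ∂(volume : Measure ℝ), y ≠ 1 := by
    have hset : {a : ℝ | ¬ a ≠ 1} = {1} := by ext a; simp
    rw [ae_iff, hset]
    exact measure_singleton 1
  have key := intervalIntegral.hasDerivAt_integral_of_dominated_loc_of_deriv_le
    (𝕜 := ℝ) (μ := volume) (a := (-1:ℝ)) (b := 1)
    (F := fun x y => (cA1 W (x, y)) ^ 2)
    (F' := fun x y => 2 * cA1 W (x, y) * cVt W (x, y))
    (x₀ := s) (bound := fun _ => M) (s := Metric.ball s (s / 2))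
    (Metric.ball_mem_nhds s (half_pos hs))
    (Filter.Eventually.of_forall (fun x =>
      (((cont_cA1 hW).comp (Continuous.prodMk_right x)).pow 2).aestronglyMeasurable))
    ((((cont_cA1 hW).comp (Continuous.prodMk_right s)).pow 2).intervalIntegrable _ _)
    (((continuous_const.mul ((cont_cA1 hW).comp (Continuous.prodMk_right s))).mul
      ((cont_cVt hW).comp (Continuous.prodMk_right s))).aestronglyMeasurable)
    ?hbound intervalIntegrable_const ?hdiff
  · exact key.2
  · refine Filter.Eventually.of_forall (fun y hy x hx => ?_)
    have hxI : x ∈ Set.Icc (s/2) (3*s/2) := by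
      have h1 := Metric.mem_ball.1 hx
      rw [Real.dist_eq] at h1
      have h2 := abs_lt.1 h1
      constructor <;> [linarith [h2.1]; linarith [h2.2]]
    have hyI : y ∈ Set.Icc (-1:ℝ) 1 := by
      rw [Set.uIoc_of_le (by norm_num : (-1:ℝ) ≤ 1)] at hy
      exact Set.Ioc_subset_Icc_self hy
    exact hM (x, y) ⟨hxI, hyI⟩
  · filter_upwards [hae1] with y hy1 hyI x hx
    have hyIoo : y ∈ Set.Ioo (-1:ℝ) 1 := by
      rw [Set.uIoc_of_le (by norm_num : (-1:ℝ) ≤ 1)] at hyI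
      exact ⟨hyI.1, lt_of_le_of_ne hyI.2 hy1⟩
    have hx0 : 0 < x := by
      have h1 := Metric.mem_ball.1 hx
      rw [Real.dist_eq] at h1
      have h2 := abs_lt.1 h1
      linarith [h2.1]
    have hc : HasDerivAt (fun τ => cA1 W (τ, y)) (cVt W (x, y)) x :=
      hasDerivAt_clamped_t (contDiffOn_pT hW) hx0 (Set.Ioo_subset_Icc_self hyIoo)
    have := hc.pow 2
    exact this.congr_deriv (by push_cast; ring)

lemma Rf_le (hW : ContDiffOn ℝ (⊤ : ℕ∞) (uncurry W) Dst)
    (hf : ContDiffOn ℝ (⊤ : ℕ∞) (uncurry f) Dst)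
    (hWbc : ∀ t ≥ (0:ℝ), W t (-1) = 0 ∧ W t 1 = 0)
    (hheat : ∀ t > (0:ℝ), ∀ y ∈ Set.Ioo (-1:ℝ) 1,
      deriv (fun τ => W τ y) t = ε * iteratedDeriv 2 (W t) y + f t y)
    (hε : 0 < ε) {s : ℝ} (hs : 0 ≤ s) :
    Rf W s ≤ 2 * Real.sqrt (Ef W s) * Phif f s := by
  have hca1 : Continuous fun y => cA1 W (s, y) := (cont_cA1 hW).comp (Continuous.prodMk_right s)
  have hcvy : Continuous fun y => cVy W (s, y) := (cont_cVy hW).comp (Continuous.prodMk_right s)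
  have hcvyy : Continuous fun y => cVyy W (s, y) := (cont_cVyy hW).comp (Continuous.prodMk_right s)
  have hcft : Continuous fun y => cFt f (s, y) := (cont_cFt hf).comp (Continuous.prodMk_right s)
  have hsplit : Rf W s = 2 * ε * (∫ y in (-1:ℝ)..1, cA1 W (s, y) * cVyy W (s, y))
      + 2 * (∫ y in (-1:ℝ)..1, cA1 W (s, y) * cFt f (s, y)) := by
    have hEq : EqOn (fun y => 2 * cA1 W (s, y) * cVt W (s, y))
        (fun y => 2 * ε * (cA1 W (s, y) * cVyy W (s, y))
          + 2 * (cA1 W (s, y) * cFt f (s, y))) (Set.uIcc (-1) 1) := by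
      intro y _
      have hveq : cVt W (s, y) = ε * cVyy W (s, y) + cFt f (s, y) :=
        Veq_on_Dst hW hf hheat (clampD (s, y)) (clampD_mem _)
      simp only [hveq]
      ring
    show (∫ y in (-1:ℝ)..1, 2 * cA1 W (s, y) * cVt W (s, y)) = _
    rw [intervalIntegral.integral_congr hEq,
      intervalIntegral.integral_add (f := fun y => 2 * ε * (cA1 W (s, y) * cVyy W (s, y)))
        (g := fun y => 2 * (cA1 W (s, y) * cFt f (s, y)))
        ((continuous_const.mul (hca1.mul hcvyy)).intervalIntegrable _ _)
        ((continuous_const.mul (hca1.mul hcft)).intervalIntegrable _ _),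
      intervalIntegral.integral_const_mul, intervalIntegral.integral_const_mul]
  have hb1 : cA1 W (s, 1) = 0 := by
    show pT (uncurry W) (clampD (s, 1)) = 0
    rw [clampD_eq (p := (s, 1)) ⟨hs, by norm_num, by norm_num⟩]
    exact (pT_boundary hW hWbc hs).1
  have hbm1 : cA1 W (s, -1) = 0 := by
    show pT (uncurry W) (clampD (s, -1)) = 0
    rw [clampD_eq (p := (s, -1)) ⟨hs, by norm_num, by norm_num⟩]
    exact (pT_boundary hW hWbc hs).2
  have hIBP : (∫ y in (-1:ℝ)..1, cA1 W (s, y) * cVyy W (s, y))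
      = - ∫ y in (-1:ℝ)..1, (cVy W (s, y)) ^ 2 := by
    have hder : ∀ σ ∈ Set.Ioo (-1:ℝ) 1,
        HasDerivAt (fun σ' => cA1 W (s, σ') * cVy W (s, σ'))
          ((cVy W (s, σ)) ^ 2 + cA1 W (s, σ) * cVyy W (s, σ)) σ := by
      intro σ hσ
      have h1 : HasDerivAt (fun σ' => cA1 W (s, σ')) (cVy W (s, σ)) σ :=
        hasDerivAt_clamped_y (contDiffOn_pT hW) hs hσ
      have h2 : HasDerivAt (fun σ' => cVy W (s, σ')) (cVyy W (s, σ)) σ :=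
        hasDerivAt_clamped_y (contDiffOn_pY (contDiffOn_pT hW)) hs hσ
      have := h1.mul h2
      exact this.congr_deriv (by ring)
    have hftc := intervalIntegral.integral_eq_sub_of_hasDerivAt_of_le
      (f := fun σ' => cA1 W (s, σ') * cVy W (s, σ'))
      (f' := fun σ => (cVy W (s, σ)) ^ 2 + cA1 W (s, σ) * cVyy W (s, σ)) (by norm_num : (-1:ℝ) ≤ 1) (Continuous.continuousOn (hca1.mul hcvy)) hder
      (((hcvy.pow 2).add (hca1.mul hcvyy)).intervalIntegrable _ _)
    rw [hb1, hbm1, zero_mul, zero_mul, sub_zero] at hftc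
    rw [intervalIntegral.integral_add (f := fun y => (cVy W (s, y)) ^ 2)
      (g := fun y => cA1 W (s, y) * cVyy W (s, y)) ((hcvy.pow 2).intervalIntegrable _ _)
      ((hca1.mul hcvyy).intervalIntegrable _ _)] at hftc
    linarith
  have hCS := cs_integral (fun y => cA1 W (s, y)) (fun y => cFt f (s, y)) hca1 hcft
  have hVy2 : (0:ℝ) ≤ ∫ y in (-1:ℝ)..1, (cVy W (s, y)) ^ 2 :=
    intervalIntegral.integral_nonneg (by norm_num) (fun y _ => sq_nonneg _)
  have hPhi : Real.sqrt (∫ y in (-1:ℝ)..1, (cFt f (s, y)) ^ 2) = Phif f s := rfl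
  have hEs : Real.sqrt (∫ y in (-1:ℝ)..1, (cA1 W (s, y)) ^ 2) = Real.sqrt (Ef W s) := rfl
  rw [hsplit, hIBP]
  rw [hPhi, hEs] at hCS
  have hgoal : 2 * ε * (∫ y in (-1:ℝ)..1, (cVy W (s, y)) ^ 2) ≥ 0 := by positivity
  nlinarith [hCS]

lemma sqrt_Ef_le (hW : ContDiffOn ℝ (⊤ : ℕ∞) (uncurry W) Dst)
    (hf : ContDiffOn ℝ (⊤ : ℕ∞) (uncurry f) Dst)
    (hWbc : ∀ t ≥ (0:ℝ), W t (-1) = 0 ∧ W t 1 = 0)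
    (hWic : ∀ y : ℝ, W 0 y = 0) (hfic : ∀ y : ℝ, f 0 y = 0)
    (hheat : ∀ t > (0:ℝ), ∀ y ∈ Set.Ioo (-1:ℝ) 1,
      deriv (fun τ => W τ y) t = ε * iteratedDeriv 2 (W t) y + f t y)
    (hε : 0 < ε) {t : ℝ} (ht : 0 < t) :
    Real.sqrt (Ef W t) ≤ ∫ s in (0:ℝ)..t, Phif f s := by
  have hEcont := cont_Ef hW
  have hPhicont := cont_Phif hf
  have hE0 : Ef W 0 = 0 := Ef_zero (ε := ε) hW hf hWic hfic hheat
  apply le_of_forall_pos_le_add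
  intro η hη
  have hpos : ∀ s' : ℝ, 0 < Ef W s' + η ^ 2 := fun s' =>
    add_pos_of_nonneg_of_pos (Ef_nonneg s') (by positivity)
  have hsqrtpos : ∀ s' : ℝ, 0 < Real.sqrt (Ef W s' + η ^ 2) := fun s' =>
    Real.sqrt_pos.2 (hpos s')
  have hφcont : Continuous (fun x => Real.sqrt (Ef W x + η ^ 2)) :=
    Real.continuous_sqrt.comp (hEcont.add continuous_const)
  have hψcont : Continuous (fun s' => Rf W s' / (2 * Real.sqrt (Ef W s' + η ^ 2))) :=
    (cont_Rf hW).div (continuous_const.mul hφcont) (fun s' => by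
      have := hsqrtpos s'; positivity)
  have hφderiv : ∀ s' ∈ Set.Ioo (0:ℝ) t,
      HasDerivAt (fun x => Real.sqrt (Ef W x + η ^ 2))
        (Rf W s' / (2 * Real.sqrt (Ef W s' + η ^ 2))) s' := by
    intro s' hs'
    have h1 : HasDerivAt (fun x => Ef W x + η ^ 2) (Rf W s') s' :=
      (hasDerivAt_Ef hW hs'.1).add_const _
    have h2 := (Real.hasDerivAt_sqrt (ne_of_gt (hpos s'))).comp s' h1
    exact h2.congr_deriv (by rw [one_div, inv_mul_eq_div])
  have hFTC := intervalIntegral.integral_eq_sub_of_hasDerivAt_of_le ht.le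
    hφcont.continuousOn hφderiv (hψcont.intervalIntegrable _ _)
  have hmono : (∫ s' in (0:ℝ)..t, Rf W s' / (2 * Real.sqrt (Ef W s' + η ^ 2)))
      ≤ ∫ s' in (0:ℝ)..t, Phif f s' := by
    apply intervalIntegral.integral_mono_on ht.le (hψcont.intervalIntegrable _ _)
      (hPhicont.intervalIntegrable _ _)
    intro s' hs'
    have hP : 0 ≤ Phif f s' := Phif_nonneg s'
    rcases le_or_gt (Rf W s') 0 with h | h
    · have hle0 : Rf W s' / (2 * Real.sqrt (Ef W s' + η ^ 2)) ≤ 0 :=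
        div_nonpos_of_nonpos_of_nonneg h (by have := hsqrtpos s'; positivity)
      linarith
    · rw [div_le_iff₀ (by have := hsqrtpos s'; positivity :
        (0:ℝ) < 2 * Real.sqrt (Ef W s' + η ^ 2))]
      have h1 := Rf_le hW hf hWbc hheat hε hs'.1
      have h2 : Real.sqrt (Ef W s') ≤ Real.sqrt (Ef W s' + η ^ 2) :=
        Real.sqrt_le_sqrt (by nlinarith [sq_nonneg η])
      have h3 : 2 * Real.sqrt (Ef W s') * Phif f s'
          ≤ 2 * Real.sqrt (Ef W s' + η ^ 2) * Phif f s' := by nlinarith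
      linarith [mul_comm (Phif f s') (2 * Real.sqrt (Ef W s' + η ^ 2))]
  have hφ0 : Real.sqrt (Ef W 0 + η ^ 2) = η := by
    rw [hE0, zero_add, Real.sqrt_sq hη.le]
  have hEt : Real.sqrt (Ef W t) ≤ Real.sqrt (Ef W t + η ^ 2) :=
    Real.sqrt_le_sqrt (by nlinarith [sq_nonneg η])
  linarith [hFTC, hmono, hφ0, hEt]

end Energy

lemma ae_ne_one : ∀ᵐ y : ℝ ∂(volume : Measure ℝ), y ≠ 1 := by
  have hset : {a : ℝ | ¬ a ≠ 1} = {1} := by ext a; simp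
  rw [ae_iff, hset]
  exact measure_singleton 1

end

end HeatAux

open HeatAux

open MeasureTheory Set Function

/-- parabolic energy estimates (4.19) in the proof of Lemma 4.3
of the paper: for the heat equation `∂_t W = ε ∂_{yy} W + f` on `[-1,1]` with
homogeneous Dirichlet boundary conditions, vanishing initial data, and a smooth
source with `f(0,·) = 0`, one has
`‖∂_t W(t)‖_{L²} ≤ 2 ∫₀^t ‖∂_s f(s)‖_{L²} ds` and
`ε ‖∂_{yy} W(t)‖_{L²} ≤ ‖f(t)‖_{L²} + 2 ∫₀^t ‖∂_s f(s)‖_{L²} ds`. -/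
theorem heat_energy_estimates
    (ε : ℝ) (hε : 0 < ε)
    (W f : ℝ → ℝ → ℝ)
    (hWsmooth : ContDiffOn ℝ (⊤ : ℕ∞) (uncurry W) (Set.Ici (0:ℝ) ×ˢ Set.Icc (-1:ℝ) 1))
    (hWbc : ∀ t ≥ (0:ℝ), W t (-1) = 0 ∧ W t 1 = 0)
    (hWic : ∀ y : ℝ, W 0 y = 0)
    (hfsmooth : ContDiffOn ℝ (⊤ : ℕ∞) (uncurry f) (Set.Ici (0:ℝ) ×ˢ Set.Icc (-1:ℝ) 1))
    (hfic : ∀ y : ℝ, f 0 y = 0)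
    (hheat : ∀ t > (0:ℝ), ∀ y ∈ Set.Ioo (-1:ℝ) 1,
      deriv (fun τ => W τ y) t = ε * iteratedDeriv 2 (W t) y + f t y) :
    ∀ t ≥ (0:ℝ),
      (Real.sqrt (∫ y in (-1:ℝ)..1, (deriv (fun τ => W τ y) t) ^ 2) ≤
        2 * ∫ s in (0:ℝ)..t,
          Real.sqrt (∫ y in (-1:ℝ)..1, (deriv (fun τ => f τ y) s) ^ 2)) ∧
      (ε * Real.sqrt (∫ y in (-1:ℝ)..1, (iteratedDeriv 2 (W t) y) ^ 2) ≤
        Real.sqrt (∫ y in (-1:ℝ)..1, (f t y) ^ 2) +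
          2 * ∫ s in (0:ℝ)..t,
            Real.sqrt (∫ y in (-1:ℝ)..1, (deriv (fun τ => f τ y) s) ^ 2)) := by
  intro t ht
  have hW : ContDiffOn ℝ (⊤ : ℕ∞) (uncurry W) Dst := hWsmooth
  have hf : ContDiffOn ℝ (⊤ : ℕ∞) (uncurry f) Dst := hfsmooth
  rcases eq_or_lt_of_le ht with h0 | htpos
  · -- the case t = 0
    have h0' : t = 0 := h0.symm
    subst h0'
    constructor
    · -- first estimate at t = 0
      have hzero : ∀ y ∈ Set.uIcc (-1:ℝ) 1, deriv (fun τ => W τ y) 0 = 0 := by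
        intro y hy
        rw [Set.uIcc_of_le (by norm_num : (-1:ℝ) ≤ 1)] at hy
        by_cases hdiff : DifferentiableAt ℝ (fun τ => W τ y) 0
        · have h1 : derivWithin (fun τ => W τ y) (Set.Ici 0) 0 = pT (uncurry W) (0, y) :=
            (hasDerivWithinAt_sliceT hW self_mem_Ici hy).derivWithin
              (uniqueDiffOn_Ici 0 0 self_mem_Ici)
          have h2 : derivWithin (fun τ => W τ y) (Set.Ici 0) 0 = deriv (fun τ => W τ y) 0 :=
            hdiff.derivWithin (uniqueDiffOn_Ici 0 0 self_mem_Ici)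
          rw [← h2, h1]
          exact pT_initial (ε := ε) hW hf hWic hfic hheat hy
        · exact deriv_zero_of_not_differentiableAt hdiff
      have hEq : EqOn (fun y => (deriv (fun τ => W τ y) 0) ^ 2) (fun _ => (0:ℝ))
          (Set.uIcc (-1:ℝ) 1) := by
        intro y hy
        simp [hzero y hy]
      rw [intervalIntegral.integral_congr hEq, intervalIntegral.integral_same]
      simp
    · -- second estimate at t = 0
      have hW0 : W 0 = fun _ => (0:ℝ) := funext hWic
      have hiter : ∀ y : ℝ, iteratedDeriv 2 (W 0) y = 0 := by
        intro y
        rw [hW0]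
        simp [iteratedDeriv_succ, iteratedDeriv_zero]
      have hEq1 : EqOn (fun y => (iteratedDeriv 2 (W 0) y) ^ 2) (fun _ => (0:ℝ))
          (Set.uIcc (-1:ℝ) 1) := by
        intro y _; simp [hiter y]
      have hEq2 : EqOn (fun y => (f 0 y) ^ 2) (fun _ => (0:ℝ)) (Set.uIcc (-1:ℝ) 1) := by
        intro y _; simp [hfic y]
      rw [intervalIntegral.integral_congr hEq1, intervalIntegral.integral_congr hEq2,
        intervalIntegral.integral_same]
      simp
  · -- the case t > 0
    have hE_eq : (∫ y in (-1:ℝ)..1, (deriv (fun τ => W τ y) t) ^ 2)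
        = ∫ y in (-1:ℝ)..1, (cA1 W (t, y)) ^ 2 := by
      apply intervalIntegral.integral_congr
      intro y hy
      rw [Set.uIcc_of_le (by norm_num : (-1:ℝ) ≤ 1)] at hy
      have h1 := deriv_slice_W hW htpos hy
      have h2 : cA1 W (t, y) = pT (uncurry W) (t, y) := by
        show pT (uncurry W) (clampD (t, y)) = _
        rw [clampD_eq (p := (t, y)) ⟨htpos.le, hy⟩]
      simp only [h1, h2]
    have hPhi_eq : (∫ s in (0:ℝ)..t,
        Real.sqrt (∫ y in (-1:ℝ)..1, (deriv (fun τ => f τ y) s) ^ 2))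
        = ∫ s in (0:ℝ)..t, Phif f s := by
      apply intervalIntegral.integral_congr_ae
      apply Filter.Eventually.of_forall
      intro s hs
      rw [Set.uIoc_of_le htpos.le] at hs
      have hinner : (∫ y in (-1:ℝ)..1, (deriv (fun τ => f τ y) s) ^ 2)
          = ∫ y in (-1:ℝ)..1, (cFt f (s, y)) ^ 2 := by
        apply intervalIntegral.integral_congr
        intro y hy
        rw [Set.uIcc_of_le (by norm_num : (-1:ℝ) ≤ 1)] at hy
        have h1 := deriv_slice_W hf hs.1 hy
        have h2 : cFt f (s, y) = pT (uncurry f) (s, y) := by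
          show pT (uncurry f) (clampD (s, y)) = _
          rw [clampD_eq (p := (s, y)) ⟨hs.1.le, hy⟩]
        simp only [h1, h2]
      show Real.sqrt _ = Phif f s
      rw [hinner]
      rfl
    have hPhiInt_nonneg : 0 ≤ ∫ s in (0:ℝ)..t, Phif f s :=
      intervalIntegral.integral_nonneg htpos.le (fun s _ => Phif_nonneg s)
    have hkey : Real.sqrt (∫ y in (-1:ℝ)..1, (cA1 W (t, y)) ^ 2)
        ≤ ∫ s in (0:ℝ)..t, Phif f s :=
      sqrt_Ef_le hW hf hWbc hWic hfic hheat hε htpos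
    constructor
    · rw [hE_eq, hPhi_eq]
      linarith
    · rw [hPhi_eq]
      -- identify the second-derivative integral
      have hB_eq : (∫ y in (-1:ℝ)..1, (iteratedDeriv 2 (W t) y) ^ 2)
          = ∫ y in (-1:ℝ)..1, (cB2 W (t, y)) ^ 2 := by
        apply intervalIntegral.integral_congr_ae
        filter_upwards [ae_ne_one] with y hy1 hyI
        rw [Set.uIoc_of_le (by norm_num : (-1:ℝ) ≤ 1)] at hyI
        have hyIoo : y ∈ Set.Ioo (-1:ℝ) 1 := ⟨hyI.1, lt_of_le_of_ne hyI.2 hy1⟩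
        have h1 := iteratedDeriv_slice_W hW htpos.le hyIoo
        have h2 : cB2 W (t, y) = pY (pY (uncurry W)) (t, y) := by
          show pY (pY (uncurry W)) (clampD (t, y)) = _
          rw [clampD_eq (p := (t, y)) ⟨htpos.le, Set.Ioo_subset_Icc_self hyIoo⟩]
        simp only [h1, h2]
      have hεB : ∀ y : ℝ, ε * cB2 W (t, y) = cA1 W (t, y) - cF f (t, y) := by
        intro y
        have h' : cA1 W (t, y) = ε * cB2 W (t, y) + cF f (t, y) :=
          heat_on_Dst hW hf hheat (clampD (t, y)) (clampD_mem _)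
        linarith
      have hsq : ε * Real.sqrt (∫ y in (-1:ℝ)..1, (cB2 W (t, y)) ^ 2)
          = Real.sqrt (∫ y in (-1:ℝ)..1, (cA1 W (t, y) - cF f (t, y)) ^ 2) := by
        have h1 : (∫ y in (-1:ℝ)..1, (cA1 W (t, y) - cF f (t, y)) ^ 2)
            = ε ^ 2 * ∫ y in (-1:ℝ)..1, (cB2 W (t, y)) ^ 2 := by
          rw [← intervalIntegral.integral_const_mul]
          apply intervalIntegral.integral_congr
          intro y _
          show (cA1 W (t, y) - cF f (t, y)) ^ 2 = ε ^ 2 * cB2 W (t, y) ^ 2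
          rw [← hεB y]
          ring
        rw [h1, Real.sqrt_mul (sq_nonneg ε), Real.sqrt_sq hε.le]
      have hmink := minkowski_integral (fun y => cA1 W (t, y)) (fun y => cF f (t, y))
        ((cont_cA1 hW).comp (Continuous.prodMk_right t))
        ((cont_cF hf).comp (Continuous.prodMk_right t))
      have hfc : (∫ y in (-1:ℝ)..1, (cF f (t, y)) ^ 2) = ∫ y in (-1:ℝ)..1, (f t y) ^ 2 := by
        apply intervalIntegral.integral_congr
        intro y hy
        rw [Set.uIcc_of_le (by norm_num : (-1:ℝ) ≤ 1)] at hy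
        have h2 : cF f (t, y) = uncurry f (t, y) := by
          show uncurry f (clampD (t, y)) = _
          rw [clampD_eq (p := (t, y)) ⟨htpos.le, hy⟩]
        simp only [h2]
        rfl
      rw [hB_eq, hsq]
      rw [hfc] at hmink
      linarith
end
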